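/- arXiv:1008.2470 — 9 statements merged into one kernel-verified Lean document; each statement's English description precedes it below -/
import Mathlib

section
/- Maximum principle for the continuous operator: let ψ : [0,1]×[0,T] → ℝⁿ be a vector function such that each component ψ_i is continuous on the closed rectangle and has a partial derivative ∂ψ_i/∂t and a second partial derivative ∂²ψ_i/∂x² at every point of Ω. If ψ ≥ 0 (componentwise) on Γ and (Lψ)(x,t) ≥ 0 (componentwise) on Ω, then ψ ≥ 0 on the closed rectangle [0,1]×[0,T]. -/
open Filter Set

/-- If `f` has derivative `d` at `a` and `f a ≤ f t` for all `t` slightly to the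
left of `a`, then `d ≤ 0`. -/
lemma aux_deriv_nonpos_of_min_left {f : ℝ → ℝ} {d a : ℝ} (hf : HasDerivAt f d a)
    (h : ∀ᶠ t in nhdsWithin a (Set.Iio a), f a ≤ f t) : d ≤ 0 := by
  have hs : Tendsto (slope f a) (nhdsWithin a (Set.Iio a)) (nhds d) :=
    (hasDerivAt_iff_tendsto_slope.mp hf).mono_left
      (nhdsWithin_mono a fun x hx => ne_of_lt hx)
  refine le_of_tendsto hs ?_
  filter_upwards [h, self_mem_nhdsWithin] with t ht ht'
  have hlt : t - a < 0 := sub_neg.mpr ht'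
  rw [slope_def_field]
  exact div_nonpos_of_nonneg_of_nonpos (sub_nonneg.mpr ht) hlt.le

/-- Second derivative test at an interior minimum. -/
lemma aux_second_deriv_nonneg {f f' : ℝ → ℝ} {f'' lo hi x : ℝ}
    (hx : x ∈ Set.Ioo lo hi)
    (hd : ∀ y ∈ Set.Ioo lo hi, HasDerivAt f (f' y) y)
    (hd2 : HasDerivAt f' f'' x)
    (hmin : ∀ y ∈ Set.Ioo lo hi, f x ≤ f y) :
    0 ≤ f'' := by
  have hloc : IsLocalMin f x :=
    Filter.eventually_of_mem (Ioo_mem_nhds hx.1 hx.2) hmin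
  have hfx' : f' x = 0 := hloc.hasDerivAt_eq_zero (hd x hx)
  by_contra hcon
  push_neg at hcon
  have hs : Tendsto (slope f' x) (nhdsWithin x (Set.Ioi x)) (nhds f'') :=
    (hasDerivAt_iff_tendsto_slope.mp hd2).mono_left
      (nhdsWithin_mono x fun y hy => ne_of_gt hy)
  have hev : ∀ᶠ y in nhdsWithin x (Set.Ioi x), slope f' x y < 0 :=
    hs (Iio_mem_nhds hcon)
  have hev2 : ∀ᶠ y in nhdsWithin x (Set.Ioi x), y ∈ Set.Ioo lo hi :=
    Filter.eventually_of_mem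
      (mem_nhdsWithin_of_mem_nhds (Ioo_mem_nhds hx.1 hx.2)) (fun y hy => hy)
  obtain ⟨u, hu, hsub⟩ := mem_nhdsGT_iff_exists_Ioo_subset.mp (hev.and hev2)
  have hxu : x < u := hu
  set b : ℝ := (x + u) / 2 with hbdef
  have hb : b ∈ Set.Ioo x u := ⟨by simp only [hbdef]; linarith, by simp only [hbdef]; linarith⟩
  have hbP := hsub hb
  have hblohi : b ∈ Set.Ioo lo hi := hbP.2
  have hkey : ∀ y ∈ Set.Ioo x b, f' y < 0 := by
    intro y hy
    have hyu : y ∈ Set.Ioo x u := ⟨hy.1, lt_trans hy.2 hb.2⟩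
    have hslope := (hsub hyu).1
    rw [slope_def_field, hfx', sub_zero] at hslope
    have hyx : 0 < y - x := sub_pos.mpr hy.1
    by_contra hge
    push_neg at hge
    exact absurd hslope (not_lt.mpr (div_nonneg hge hyx.le))
  have hIcc : Set.Icc x b ⊆ Set.Ioo lo hi := fun y hy =>
    ⟨lt_of_lt_of_le hx.1 hy.1, lt_of_le_of_lt hy.2 hblohi.2⟩
  have hanti : StrictAntiOn f (Set.Icc x b) := by
    refine strictAntiOn_of_deriv_neg (convex_Icc x b)
      (fun y hy => ((hd y (hIcc hy)).continuousAt).continuousWithinAt) ?_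
    intro y hy
    rw [interior_Icc] at hy
    rw [(hd y (hIcc ⟨hy.1.le, hy.2.le⟩)).deriv]
    exact hkey y hy
  have hxb : x < b := hb.1
  have : f b < f x := hanti ⟨le_refl x, hxb.le⟩ ⟨hxb.le, le_refl b⟩ hxb
  exact absurd (hmin b hblohi) (not_le.mpr this)

/-- **Maximum principle for the continuous operator** (Lemma 1 of the paper).
Components are indexed by `i ∈ {1,…,n}`.  The operator
`(Lψ)_i = ∂ψ_i/∂t − ε_i ∂²ψ_i/∂x² + Σ_j a_ij ψ_j` is expressed through the
partial-derivative data `ψt` (= ∂ψ/∂t), `ψx` (= ∂ψ/∂x) and `ψxx` (= ∂²ψ/∂x²),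
whose defining `HasDerivAt` properties are assumed on
`Ω = {(x,t) : 0 < x < 1, 0 < t ≤ T}`. -/
theorem stmt_0
    (n : ℕ) (hn : 1 ≤ n) (T : ℝ) (hT : 0 < T)
    (ε : ℕ → ℝ)
    (hε0 : ∀ i ∈ Finset.Icc 1 n, 0 < ε i)
    (hε1 : ∀ i ∈ Finset.Icc 1 n, ε i ≤ 1)
    (hεmono : ∀ i j : ℕ, 1 ≤ i → i < j → j ≤ n → ε i < ε j)
    (A : ℕ → ℕ → ℝ → ℝ → ℝ)
    (hAcont : ∀ i ∈ Finset.Icc 1 n, ∀ j ∈ Finset.Icc 1 n,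
      ContinuousOn (fun p : ℝ × ℝ => A i j p.1 p.2) (Set.Icc (0:ℝ) 1 ×ˢ Set.Icc (0:ℝ) T))
    (hAdiag : ∀ i ∈ Finset.Icc 1 n, ∀ x ∈ Set.Icc (0:ℝ) 1, ∀ t ∈ Set.Icc (0:ℝ) T,
      ∑ j ∈ (Finset.Icc 1 n).erase i, |A i j x t| < A i i x t)
    (hAoff : ∀ i ∈ Finset.Icc 1 n, ∀ j ∈ Finset.Icc 1 n, i ≠ j →
      ∀ x ∈ Set.Icc (0:ℝ) 1, ∀ t ∈ Set.Icc (0:ℝ) T, A i j x t ≤ 0)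
    (α : ℝ) (hα : 0 < α)
    (hαA : ∀ x ∈ Set.Icc (0:ℝ) 1, ∀ t ∈ Set.Icc (0:ℝ) T, ∀ i ∈ Finset.Icc 1 n,
      α < ∑ j ∈ Finset.Icc 1 n, A i j x t)
    (ψ ψt ψx ψxx : ℕ → ℝ → ℝ → ℝ)
    (hψcont : ∀ i ∈ Finset.Icc 1 n,
      ContinuousOn (fun p : ℝ × ℝ => ψ i p.1 p.2) (Set.Icc (0:ℝ) 1 ×ˢ Set.Icc (0:ℝ) T))
    (hψt : ∀ i ∈ Finset.Icc 1 n, ∀ x t : ℝ, 0 < x → x < 1 → 0 < t → t ≤ T →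
      HasDerivAt (fun s => ψ i x s) (ψt i x t) t)
    (hψx : ∀ i ∈ Finset.Icc 1 n, ∀ x t : ℝ, 0 < x → x < 1 → 0 < t → t ≤ T →
      HasDerivAt (fun y => ψ i y t) (ψx i x t) x)
    (hψxx : ∀ i ∈ Finset.Icc 1 n, ∀ x t : ℝ, 0 < x → x < 1 → 0 < t → t ≤ T →
      HasDerivAt (fun y => ψx i y t) (ψxx i x t) x)
    (hΓ : ∀ i ∈ Finset.Icc 1 n, ∀ x ∈ Set.Icc (0:ℝ) 1, ∀ t ∈ Set.Icc (0:ℝ) T,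
      (x = 0 ∨ x = 1 ∨ t = 0) → 0 ≤ ψ i x t)
    (hL : ∀ i ∈ Finset.Icc 1 n, ∀ x t : ℝ, 0 < x → x < 1 → 0 < t → t ≤ T →
      0 ≤ ψt i x t - ε i * ψxx i x t + ∑ j ∈ Finset.Icc 1 n, A i j x t * ψ j x t) :
    ∀ i ∈ Finset.Icc 1 n, ∀ x ∈ Set.Icc (0:ℝ) 1, ∀ t ∈ Set.Icc (0:ℝ) T,
      0 ≤ ψ i x t := by
  by_contra hcon
  push_neg at hcon
  obtain ⟨i0, hi0, x0, hx0, t0, ht0, hneg⟩ := hcon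
  set K : Set (ℝ × ℝ) := Set.Icc (0:ℝ) 1 ×ˢ Set.Icc (0:ℝ) T with hKdef
  have hKcomp : IsCompact K := isCompact_Icc.prod isCompact_Icc
  have hKne : K.Nonempty := ⟨(x0, t0), ⟨hx0, ht0⟩⟩
  -- minimizer for each component
  have hminex : ∀ i ∈ Finset.Icc 1 n, ∃ p ∈ K, ∀ q ∈ K, ψ i p.1 p.2 ≤ ψ i q.1 q.2 := by
    intro i hi
    obtain ⟨p, hpK, hpmin⟩ := hKcomp.exists_isMinOn hKne (hψcont i hi)
    exact ⟨p, hpK, fun q hq => hpmin hq⟩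
  choose! P hPK hPmin using hminex
  obtain ⟨I, hI, hImin⟩ := Finset.exists_min_image (Finset.Icc 1 n)
    (fun i => ψ i (P i).1 (P i).2) ⟨i0, hi0⟩
  set X : ℝ := (P I).1 with hXdef
  set τ : ℝ := (P I).2 with hτdef
  set m : ℝ := ψ I X τ with hmdef
  have hglob : ∀ j ∈ Finset.Icc 1 n, ∀ q ∈ K, m ≤ ψ j q.1 q.2 := by
    intro j hj q hq
    exact le_trans (hImin j hj) (hPmin j hj q hq)
  have hPIK : (X, τ) ∈ K := hPK I hI
  have hX01 : X ∈ Set.Icc (0:ℝ) 1 := hPIK.1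
  have hτT : τ ∈ Set.Icc (0:ℝ) T := hPIK.2
  have hmneg : m < 0 :=
    lt_of_le_of_lt (hglob i0 hi0 (x0, t0) ⟨hx0, ht0⟩) hneg
  -- interior location
  have hnotb : ¬ (X = 0 ∨ X = 1 ∨ τ = 0) := by
    intro hb
    exact absurd (hΓ I hI X hX01 τ hτT hb) (not_le.mpr hmneg)
  push_neg at hnotb
  obtain ⟨hX0, hX1, hτ0⟩ := hnotb
  have hXlt : 0 < X := lt_of_le_of_ne hX01.1 (Ne.symm hX0)
  have hXgt : X < 1 := lt_of_le_of_ne hX01.2 hX1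
  have hτpos : 0 < τ := lt_of_le_of_ne hτT.1 (Ne.symm hτ0)
  have hτle : τ ≤ T := hτT.2
  -- ψt ≤ 0 at minimum
  have hψtle : ψt I X τ ≤ 0 := by
    refine aux_deriv_nonpos_of_min_left (hψt I hI X τ hXlt hXgt hτpos hτle) ?_
    have hmem : Set.Ioo 0 τ ∈ nhdsWithin τ (Set.Iio τ) := Ioo_mem_nhdsLT hτpos
    filter_upwards [hmem] with t ht
    exact hglob I hI (X, t) ⟨hX01, ⟨ht.1.le, le_trans ht.2.le hτle⟩⟩
  -- ψxx ≥ 0 at minimum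
  have hψxxge : 0 ≤ ψxx I X τ := by
    refine aux_second_deriv_nonneg (f := fun y => ψ I y τ) (f' := fun y => ψx I y τ)
      (lo := 0) (hi := 1) ⟨hXlt, hXgt⟩ ?_ (hψxx I hI X τ hXlt hXgt hτpos hτle) ?_
    · intro y hy
      exact hψx I hI y τ hy.1 hy.2 hτpos hτle
    · intro y hy
      exact hglob I hI (y, τ) ⟨⟨hy.1.le, hy.2.le⟩, hτT⟩
  -- the reaction sum is negative
  have hdiagpos : 0 ≤ A I I X τ := by
    have := hAdiag I hI X hX01 τ hτT
    refine le_of_lt (lt_of_le_of_lt ?_ this)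
    exact Finset.sum_nonneg fun j _ => abs_nonneg _
  have hsum1 : ∑ j ∈ Finset.Icc 1 n, A I j X τ * ψ j X τ
      ≤ ∑ j ∈ Finset.Icc 1 n, A I j X τ * m := by
    refine Finset.sum_le_sum fun j hj => ?_
    by_cases hji : j = I
    · subst hji
      have : ψ j X τ = m := rfl
      rw [this]
    · have hA := hAoff I hI j hj (fun h => hji h.symm) X hX01 τ hτT
      have hψj : m ≤ ψ j X τ := hglob j hj (X, τ) hPIK
      exact mul_le_mul_of_nonpos_left hψj hA
  have hsum2 : ∑ j ∈ Finset.Icc 1 n, A I j X τ * m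
      = (∑ j ∈ Finset.Icc 1 n, A I j X τ) * m := by
    rw [Finset.sum_mul]
  have hαlt : α < ∑ j ∈ Finset.Icc 1 n, A I j X τ := hαA X hX01 τ hτT I hI
  have hsumneg : ∑ j ∈ Finset.Icc 1 n, A I j X τ * ψ j X τ < 0 := by
    have h1 : (∑ j ∈ Finset.Icc 1 n, A I j X τ) * m < α * m :=
      mul_lt_mul_of_neg_right hαlt hmneg
    have h2 : α * m < 0 := mul_neg_of_pos_of_neg hα hmneg
    calc ∑ j ∈ Finset.Icc 1 n, A I j X τ * ψ j X τ
        ≤ (∑ j ∈ Finset.Icc 1 n, A I j X τ) * m := by rw [← hsum2]; exact hsum1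
      _ < α * m := h1
      _ < 0 := h2
  -- contradiction with hL
  have hLI := hL I hI X τ hXlt hXgt hτpos hτle
  have hεψ : 0 ≤ ε I * ψxx I X τ := mul_nonneg (hε0 I hI).le hψxxge
  linarith
end

section
/- Stability estimate for the continuous operator: let ψ : [0,1]×[0,T] → ℝⁿ be a vector function such that each component ψ_i is continuous on the closed rectangle and has ∂ψ_i/∂t and ∂²ψ_i/∂x² at every point of Ω. Then for each i, 1 ≤ i ≤ n, and every (x,t) in the closed rectangle, |ψ_i(x,t)| ≤ max{ ‖ψ‖_Γ , (1/α)‖Lψ‖_Ω }, where ‖ψ‖_Γ = sup over Γ of max_i |ψ_i| and ‖Lψ‖_Ω = sup over Ω of max_i |(Lψ)_i|. -/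
open Set Filter Topology

lemma aux_upper
    (n : ℕ) (T : ℝ) (hT : 0 < T)
    (ε : ℕ → ℝ)
    (hε0 : ∀ i ∈ Finset.Icc 1 n, 0 < ε i)
    (A : ℕ → ℕ → ℝ → ℝ → ℝ)
    (hAoff : ∀ i ∈ Finset.Icc 1 n, ∀ j ∈ Finset.Icc 1 n, i ≠ j →
      ∀ x ∈ Set.Icc (0:ℝ) 1, ∀ t ∈ Set.Icc (0:ℝ) T, A i j x t ≤ 0)
    (α : ℝ) (hα : 0 < α)
    (hαA : ∀ x ∈ Set.Icc (0:ℝ) 1, ∀ t ∈ Set.Icc (0:ℝ) T, ∀ i ∈ Finset.Icc 1 n,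
      α < ∑ j ∈ Finset.Icc 1 n, A i j x t)
    (ψ ψt ψx ψxx : ℕ → ℝ → ℝ → ℝ)
    (hψcont : ∀ i ∈ Finset.Icc 1 n,
      ContinuousOn (fun p : ℝ × ℝ => ψ i p.1 p.2) (Set.Icc (0:ℝ) 1 ×ˢ Set.Icc (0:ℝ) T))
    (hψt : ∀ i ∈ Finset.Icc 1 n, ∀ x t : ℝ, 0 < x → x < 1 → 0 < t → t ≤ T →
      HasDerivAt (fun s => ψ i x s) (ψt i x t) t)
    (hψx : ∀ i ∈ Finset.Icc 1 n, ∀ x t : ℝ, 0 < x → x < 1 → 0 < t → t ≤ T →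
      HasDerivAt (fun y => ψ i y t) (ψx i x t) x)
    (hψxx : ∀ i ∈ Finset.Icc 1 n, ∀ x t : ℝ, 0 < x → x < 1 → 0 < t → t ≤ T →
      HasDerivAt (fun y => ψx i y t) (ψxx i x t) x)
    (KΓ KL : ℝ) (hKΓ0 : 0 ≤ KΓ)
    (hKΓ : ∀ i ∈ Finset.Icc 1 n, ∀ x ∈ Set.Icc (0:ℝ) 1, ∀ t ∈ Set.Icc (0:ℝ) T,
      (x = 0 ∨ x = 1 ∨ t = 0) → ψ i x t ≤ KΓ)
    (hKL : ∀ i ∈ Finset.Icc 1 n, ∀ x t : ℝ, 0 < x → x < 1 → 0 < t → t ≤ T →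
      ψt i x t - ε i * ψxx i x t + ∑ j ∈ Finset.Icc 1 n, A i j x t * ψ j x t ≤ KL) :
    ∀ i ∈ Finset.Icc 1 n, ∀ x ∈ Set.Icc (0:ℝ) 1, ∀ t ∈ Set.Icc (0:ℝ) T,
      ψ i x t ≤ max KΓ ((1 / α) * KL) := by
  intro i hi x hx t ht
  by_contra hcon
  push_neg at hcon
  set M := max KΓ ((1 / α) * KL) with hM
  set K : Set (ℝ × ℝ) := Set.Icc (0:ℝ) 1 ×ˢ Set.Icc (0:ℝ) T with hK
  have hKc : IsCompact K := isCompact_Icc.prod isCompact_Icc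
  have h00 : ((0:ℝ), (0:ℝ)) ∈ K := ⟨⟨le_refl 0, zero_le_one⟩, ⟨le_refl 0, hT.le⟩⟩
  have hKne : K.Nonempty := ⟨_, h00⟩
  have key : ∀ j : ℕ, ∃ p : ℝ × ℝ, p ∈ K ∧
      (j ∈ Finset.Icc 1 n → ∀ q ∈ K, ψ j q.1 q.2 ≤ ψ j p.1 p.2) := by
    intro j
    by_cases hj : j ∈ Finset.Icc 1 n
    · obtain ⟨p, hp, hmax⟩ := hKc.exists_isMaxOn hKne (hψcont j hj)
      exact ⟨p, hp, fun _ q hq => hmax hq⟩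
    · exact ⟨(0, 0), h00, fun h => absurd h hj⟩
  choose p hpK hpmax using key
  obtain ⟨i0, hi0, hmax⟩ := Finset.exists_max_image (Finset.Icc 1 n)
    (fun j => ψ j (p j).1 (p j).2) ⟨i, hi⟩
  set x0 := (p i0).1 with hx0def
  set t0 := (p i0).2 with ht0def
  have hS_ge : ∀ j ∈ Finset.Icc 1 n, ∀ q ∈ K, ψ j q.1 q.2 ≤ ψ i0 x0 t0 :=
    fun j hj q hq => (hpmax j hj q hq).trans (hmax j hj)
  have hxt : (x, t) ∈ K := ⟨hx, ht⟩
  have hMS : M < ψ i0 x0 t0 := lt_of_lt_of_le hcon (hS_ge i hi (x, t) hxt)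
  have hx0 : x0 ∈ Set.Icc (0:ℝ) 1 := (hpK i0).1
  have ht0 : t0 ∈ Set.Icc (0:ℝ) T := (hpK i0).2
  have hnb : ¬(x0 = 0 ∨ x0 = 1 ∨ t0 = 0) := by
    intro h
    have := hKΓ i0 hi0 x0 hx0 t0 ht0 h
    have : ψ i0 x0 t0 ≤ M := this.trans (le_max_left _ _)
    linarith
  push_neg at hnb
  have hx0p : 0 < x0 := hx0.1.lt_of_ne (Ne.symm hnb.1)
  have hx0l : x0 < 1 := hx0.2.lt_of_ne hnb.2.1
  have ht0p : 0 < t0 := ht0.1.lt_of_ne (Ne.symm hnb.2.2)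
  have ht0T : t0 ≤ T := ht0.2
  have hSpos : 0 < ψ i0 x0 t0 := lt_of_le_of_lt (hKΓ0.trans (le_max_left _ _)) hMS
  -- first space derivative vanishes
  have hgmax : IsLocalMax (fun y => ψ i0 y t0) x0 := by
    filter_upwards [Icc_mem_nhds hx0p hx0l] with y hy
    exact hS_ge i0 hi0 (y, t0) ⟨hy, ht0⟩
  have hψx0 : ψx i0 x0 t0 = 0 :=
    hgmax.hasDerivAt_eq_zero (hψx i0 hi0 x0 t0 hx0p hx0l ht0p ht0T)
  -- time derivative nonnegative
  have hts : Tendsto (slope (fun s => ψ i0 x0 s) t0) (𝓝[<] t0) (𝓝 (ψt i0 x0 t0)) :=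
    (hasDerivAt_iff_tendsto_slope.mp (hψt i0 hi0 x0 t0 hx0p hx0l ht0p ht0T)).mono_left
      (nhdsWithin_mono t0 (fun s hs => ne_of_lt hs))
  have hψtpos : 0 ≤ ψt i0 x0 t0 := by
    refine ge_of_tendsto hts ?_
    filter_upwards [Ioo_mem_nhdsLT_of_mem (⟨ht0p, le_refl t0⟩ : t0 ∈ Set.Ioc 0 t0)] with s hs
    rw [slope_def_field]
    have h1 : ψ i0 x0 s ≤ ψ i0 x0 t0 :=
      hS_ge i0 hi0 (x0, s) ⟨hx0, ⟨hs.1.le, hs.2.le.trans ht0T⟩⟩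
    exact div_nonneg_iff.mpr (Or.inr ⟨by linarith, by linarith [hs.2]⟩)
  -- second space derivative nonpositive
  have hψxxle : ψxx i0 x0 t0 ≤ 0 := by
    by_contra hpos
    push_neg at hpos
    have hds : Tendsto (slope (fun y => ψx i0 y t0) x0) (𝓝[>] x0) (𝓝 (ψxx i0 x0 t0)) :=
      (hasDerivAt_iff_tendsto_slope.mp (hψxx i0 hi0 x0 t0 hx0p hx0l ht0p ht0T)).mono_left
        (nhdsWithin_mono x0 (fun y hy => ne_of_gt hy))
    have hev : ∀ᶠ y in 𝓝[>] x0, 0 < slope (fun y => ψx i0 y t0) x0 y :=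
      hds.eventually (eventually_gt_nhds hpos)
    have hev2 : ∀ᶠ y in 𝓝[>] x0, 0 < ψx i0 y t0 := by
      filter_upwards [hev, self_mem_nhdsWithin] with y hy hy2
      rw [slope_def_field, hψx0, sub_zero] at hy
      rcases div_pos_iff.mp hy with h | h
      · exact h.1
      · have : (0:ℝ) < y - x0 := sub_pos.mpr hy2
        linarith [h.2]
    obtain ⟨b, hb, hsub⟩ := mem_nhdsGT_iff_exists_Ioo_subset.mp hev2
    set b' := min b 1 with hb'
    have hx0b' : x0 < b' := lt_min hb hx0l
    have hcontg : ContinuousOn (fun y => ψ i0 y t0) (Set.Icc x0 b') := by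
      have h1 : ContinuousOn (fun y : ℝ => ψ i0 y t0) (Set.Icc (0:ℝ) 1) :=
        (hψcont i0 hi0).comp (Continuous.continuousOn (continuous_id.prodMk continuous_const))
          (fun y hy => ⟨hy, ht0⟩)
      exact h1.mono (Set.Icc_subset_Icc hx0p.le (min_le_right _ _))
    have hmono : StrictMonoOn (fun y => ψ i0 y t0) (Set.Icc x0 b') := by
      apply strictMonoOn_of_deriv_pos (convex_Icc _ _) hcontg
      intro y hy
      rw [interior_Icc] at hy
      have hy1 : 0 < y := hx0p.trans hy.1
      have hy2 : y < 1 := lt_of_lt_of_le hy.2 (min_le_right _ _)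
      rw [(hψx i0 hi0 y t0 hy1 hy2 ht0p ht0T).deriv]
      exact hsub ⟨hy.1, lt_of_lt_of_le hy.2 (min_le_left _ _)⟩
    set m := (x0 + b') / 2 with hm
    have hmio : m ∈ Set.Ioo x0 b' := ⟨by simp only [hm]; linarith, by simp only [hm]; linarith⟩
    have hlt : ψ i0 x0 t0 < ψ i0 m t0 :=
      hmono (Set.left_mem_Icc.mpr hx0b'.le) ⟨hmio.1.le, hmio.2.le⟩ hmio.1
    have hle : ψ i0 m t0 ≤ ψ i0 x0 t0 :=
      hS_ge i0 hi0 (m, t0) ⟨⟨hx0p.le.trans hmio.1.le,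
        hmio.2.le.trans (min_le_right _ _)⟩, ht0⟩
    linarith
  -- the sum estimate
  have hsum : α * ψ i0 x0 t0 ≤ ∑ j ∈ Finset.Icc 1 n, A i0 j x0 t0 * ψ j x0 t0 := by
    have h1 : ∀ j ∈ Finset.Icc 1 n,
        A i0 j x0 t0 * ψ i0 x0 t0 ≤ A i0 j x0 t0 * ψ j x0 t0 := by
      intro j hj
      rcases eq_or_ne i0 j with rfl | hne
      · exact le_refl _
      · exact mul_le_mul_of_nonpos_left (hS_ge j hj (x0, t0) (hpK i0))
          (hAoff i0 hi0 j hj hne x0 hx0 t0 ht0)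
    calc α * ψ i0 x0 t0
        ≤ (∑ j ∈ Finset.Icc 1 n, A i0 j x0 t0) * ψ i0 x0 t0 :=
          mul_le_mul_of_nonneg_right (hαA x0 hx0 t0 ht0 i0 hi0).le hSpos.le
      _ = ∑ j ∈ Finset.Icc 1 n, A i0 j x0 t0 * ψ i0 x0 t0 := Finset.sum_mul _ _ _
      _ ≤ ∑ j ∈ Finset.Icc 1 n, A i0 j x0 t0 * ψ j x0 t0 := Finset.sum_le_sum h1
  have hKLge := hKL i0 hi0 x0 t0 hx0p hx0l ht0p ht0T
  have hεψ : ε i0 * ψxx i0 x0 t0 ≤ 0 :=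
    mul_nonpos_of_nonneg_of_nonpos (hε0 i0 hi0).le hψxxle
  have hαS : α * ψ i0 x0 t0 ≤ KL := by linarith
  have hKLM : KL ≤ α * M := by
    have h2 : (1 / α) * KL ≤ M := le_max_right _ _
    have h3 : α * ((1 / α) * KL) = KL := by field_simp
    nlinarith
  have : α * M < α * ψ i0 x0 t0 := mul_lt_mul_of_pos_left hMS hα
  linarith



/-- **Stability estimate for the continuous operator** (Lemma 2 of the paper).
For every bound `KΓ` on `max_i |ψ_i|` over the boundary `Γ` and every bound
`KL` on `max_i |(Lψ)_i|` over `Ω`, one has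
`|ψ_i(x,t)| ≤ max {KΓ, (1/α) KL}` on the closed rectangle; this is the
least-upper-bound formulation of
`|ψ_i(x,t)| ≤ max {‖ψ‖_Γ, (1/α)‖Lψ‖_Ω}`. -/
theorem stmt_1
    (n : ℕ) (hn : 1 ≤ n) (T : ℝ) (hT : 0 < T)
    (ε : ℕ → ℝ)
    (hε0 : ∀ i ∈ Finset.Icc 1 n, 0 < ε i)
    (hε1 : ∀ i ∈ Finset.Icc 1 n, ε i ≤ 1)
    (hεmono : ∀ i j : ℕ, 1 ≤ i → i < j → j ≤ n → ε i < ε j)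
    (A : ℕ → ℕ → ℝ → ℝ → ℝ)
    (hAcont : ∀ i ∈ Finset.Icc 1 n, ∀ j ∈ Finset.Icc 1 n,
      ContinuousOn (fun p : ℝ × ℝ => A i j p.1 p.2) (Set.Icc (0:ℝ) 1 ×ˢ Set.Icc (0:ℝ) T))
    (hAdiag : ∀ i ∈ Finset.Icc 1 n, ∀ x ∈ Set.Icc (0:ℝ) 1, ∀ t ∈ Set.Icc (0:ℝ) T,
      ∑ j ∈ (Finset.Icc 1 n).erase i, |A i j x t| < A i i x t)
    (hAoff : ∀ i ∈ Finset.Icc 1 n, ∀ j ∈ Finset.Icc 1 n, i ≠ j →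
      ∀ x ∈ Set.Icc (0:ℝ) 1, ∀ t ∈ Set.Icc (0:ℝ) T, A i j x t ≤ 0)
    (α : ℝ) (hα : 0 < α)
    (hαA : ∀ x ∈ Set.Icc (0:ℝ) 1, ∀ t ∈ Set.Icc (0:ℝ) T, ∀ i ∈ Finset.Icc 1 n,
      α < ∑ j ∈ Finset.Icc 1 n, A i j x t)
    (ψ ψt ψx ψxx : ℕ → ℝ → ℝ → ℝ)
    (hψcont : ∀ i ∈ Finset.Icc 1 n,
      ContinuousOn (fun p : ℝ × ℝ => ψ i p.1 p.2) (Set.Icc (0:ℝ) 1 ×ˢ Set.Icc (0:ℝ) T))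
    (hψt : ∀ i ∈ Finset.Icc 1 n, ∀ x t : ℝ, 0 < x → x < 1 → 0 < t → t ≤ T →
      HasDerivAt (fun s => ψ i x s) (ψt i x t) t)
    (hψx : ∀ i ∈ Finset.Icc 1 n, ∀ x t : ℝ, 0 < x → x < 1 → 0 < t → t ≤ T →
      HasDerivAt (fun y => ψ i y t) (ψx i x t) x)
    (hψxx : ∀ i ∈ Finset.Icc 1 n, ∀ x t : ℝ, 0 < x → x < 1 → 0 < t → t ≤ T →
      HasDerivAt (fun y => ψx i y t) (ψxx i x t) x)
    (KΓ KL : ℝ)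
    (hKΓ : ∀ i ∈ Finset.Icc 1 n, ∀ x ∈ Set.Icc (0:ℝ) 1, ∀ t ∈ Set.Icc (0:ℝ) T,
      (x = 0 ∨ x = 1 ∨ t = 0) → |ψ i x t| ≤ KΓ)
    (hKL : ∀ i ∈ Finset.Icc 1 n, ∀ x t : ℝ, 0 < x → x < 1 → 0 < t → t ≤ T →
      |ψt i x t - ε i * ψxx i x t + ∑ j ∈ Finset.Icc 1 n, A i j x t * ψ j x t| ≤ KL) :
    ∀ i ∈ Finset.Icc 1 n, ∀ x ∈ Set.Icc (0:ℝ) 1, ∀ t ∈ Set.Icc (0:ℝ) T,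
      |ψ i x t| ≤ max KΓ ((1 / α) * KL) := by
  intro i hi x hx t ht
  have h1mem : 1 ∈ Finset.Icc 1 n := Finset.mem_Icc.mpr ⟨le_refl 1, hn⟩
  have hKΓ0 : 0 ≤ KΓ :=
    (abs_nonneg _).trans (hKΓ 1 h1mem 0 ⟨le_refl 0, zero_le_one⟩ 0 ⟨le_refl 0, hT.le⟩ (Or.inl rfl))
  have h1 := aux_upper n T hT ε hε0 A hAoff α hα hαA ψ ψt ψx ψxx hψcont hψt hψx hψxx KΓ KL hKΓ0
    (fun i hi x hx t ht hb => (le_abs_self _).trans (hKΓ i hi x hx t ht hb))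
    (fun i hi x t a b c d => (le_abs_self _).trans (hKL i hi x t a b c d))
    i hi x hx t ht
  have h2 := aux_upper n T hT ε hε0 A hAoff α hα hαA
    (fun i x t => -ψ i x t) (fun i x t => -ψt i x t)
    (fun i x t => -ψx i x t) (fun i x t => -ψxx i x t)
    (fun i hi => (hψcont i hi).neg)
    (fun i hi x t a b c d => (hψt i hi x t a b c d).neg)
    (fun i hi x t a b c d => (hψx i hi x t a b c d).neg)
    (fun i hi x t a b c d => (hψxx i hi x t a b c d).neg)
    KΓ KL hKΓ0
    (fun i hi x hx t ht hb => (neg_le_abs _).trans (hKΓ i hi x hx t ht hb))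
    (fun i hi x t a b c d => by
      have hb1 := hKL i hi x t a b c d
      have hs : ∑ j ∈ Finset.Icc 1 n, A i j x t * -ψ j x t
          = -∑ j ∈ Finset.Icc 1 n, A i j x t * ψ j x t := by
        rw [← Finset.sum_neg_distrib]
        exact Finset.sum_congr rfl fun j _ => (mul_neg _ _)
      show -ψt i x t - ε i * -ψxx i x t
          + ∑ j ∈ Finset.Icc 1 n, A i j x t * -ψ j x t ≤ KL
      rw [hs]
      have habs := neg_abs_le (ψt i x t - ε i * ψxx i x t
        + ∑ j ∈ Finset.Icc 1 n, A i j x t * ψ j x t)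
      linarith)
    i hi x hx t ht
  exact abs_le.mpr ⟨by linarith [h2], h1⟩
end

section
/- Bounds on the left singular component and its time derivatives: there exists a constant C, independent of ε_1,…,ε_n, such that for every (x,t) in the closed rectangle and each i = 1,…,n, |∂^l w_i^L/∂t^l(x,t)| ≤ C B_n^L(x) for l = 0,1,2, where B_n^L(x) = exp(−x√(α/ε_n)). -/
open Set Filter Real Topology

/-- Directional partial derivative of a function on `ℝ × ℝ`. -/
noncomputable def Pv (v : ℝ × ℝ) (F : ℝ × ℝ → ℝ) (p : ℝ × ℝ) : ℝ := fderiv ℝ F p v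

noncomputable def Pt : (ℝ × ℝ → ℝ) → (ℝ × ℝ → ℝ) := Pv ((0:ℝ), (1:ℝ))
noncomputable def Px : (ℝ × ℝ → ℝ) → (ℝ × ℝ → ℝ) := Pv ((1:ℝ), (0:ℝ))

lemma contDiff_Pv {F : ℝ × ℝ → ℝ} (hF : ContDiff ℝ (⊤ : ℕ∞) F) (v : ℝ × ℝ) :
    ContDiff ℝ (⊤ : ℕ∞) (Pv v F) :=
  (hF.fderiv_right (by simp)).clm_apply contDiff_const

lemma contDiff_Pt {F : ℝ × ℝ → ℝ} (hF : ContDiff ℝ (⊤ : ℕ∞) F) : ContDiff ℝ (⊤ : ℕ∞) (Pt F) :=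
  contDiff_Pv hF _

lemma contDiff_Px {F : ℝ × ℝ → ℝ} (hF : ContDiff ℝ (⊤ : ℕ∞) F) : ContDiff ℝ (⊤ : ℕ∞) (Px F) :=
  contDiff_Pv hF _

lemma hasDerivAt_Pt {F : ℝ × ℝ → ℝ} (hF : ContDiff ℝ (⊤ : ℕ∞) F) (x t : ℝ) :
    HasDerivAt (fun s => F (x, s)) (Pt F (x, t)) t := by
  have h1 : HasDerivAt (fun s : ℝ => ((x, s) : ℝ × ℝ)) ((0:ℝ), (1:ℝ)) t :=
    (hasDerivAt_const t x).prodMk (hasDerivAt_id t)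
  have h2 := ((hF.differentiable (by simp)) (x, t)).hasFDerivAt
  simpa [Function.comp_def, Pt, Pv] using h2.comp_hasDerivAt t h1

lemma hasDerivAt_Px {F : ℝ × ℝ → ℝ} (hF : ContDiff ℝ (⊤ : ℕ∞) F) (x t : ℝ) :
    HasDerivAt (fun y => F (y, t)) (Px F (x, t)) x := by
  have h1 : HasDerivAt (fun y : ℝ => ((y, t) : ℝ × ℝ)) ((1:ℝ), (0:ℝ)) x :=
    (hasDerivAt_id x).prodMk (hasDerivAt_const x t)
  have h2 := ((hF.differentiable (by simp)) (x, t)).hasFDerivAt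
  simpa [Function.comp_def, Px, Pv] using h2.comp_hasDerivAt x h1

lemma deriv_Pt {F : ℝ × ℝ → ℝ} (hF : ContDiff ℝ (⊤ : ℕ∞) F) (x t : ℝ) :
    deriv (fun s => F (x, s)) t = Pt F (x, t) := (hasDerivAt_Pt hF x t).deriv

lemma deriv_Px {F : ℝ × ℝ → ℝ} (hF : ContDiff ℝ (⊤ : ℕ∞) F) (x t : ℝ) :
    deriv (fun y => F (y, t)) x = Px F (x, t) := (hasDerivAt_Px hF x t).deriv

lemma Pt_Px_comm {F : ℝ × ℝ → ℝ} (hF : ContDiff ℝ (⊤ : ℕ∞) F) (p : ℝ × ℝ) :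
    Px (Pt F) p = Pt (Px F) p := by
  have hsymm : IsSymmSndFDerivAt ℝ F p := hF.contDiffAt.isSymmSndFDerivAt (by rw [minSmoothness_of_isRCLikeNormedField]; exact WithTop.coe_le_coe.mpr (le_top : (2:ℕ∞) ≤ ⊤))
  have hdF : DifferentiableAt ℝ (fderiv ℝ F) p :=
    ((hF.fderiv_right (m := 1) (WithTop.coe_le_coe.mpr le_top)).differentiable one_ne_zero) p
  have key : ∀ v : ℝ × ℝ, fderiv ℝ (fun q => fderiv ℝ F q v) p =
      (fderiv ℝ (fderiv ℝ F) p).flip v := by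
    intro v
    rw [fderiv_clm_apply hdF (differentiableAt_const v)]
    have h0 : fderiv ℝ (fun _ : ℝ × ℝ => v) p = 0 := fderiv_const_apply v
    rw [h0, ContinuousLinearMap.comp_zero, zero_add]
  have e1 : Px (Pt F) p = fderiv ℝ (fderiv ℝ F) p ((1:ℝ),(0:ℝ)) ((0:ℝ),(1:ℝ)) := by
    show fderiv ℝ (fun q => fderiv ℝ F q ((0:ℝ),(1:ℝ))) p ((1:ℝ),(0:ℝ)) = _
    rw [key]; rfl
  have e2 : Pt (Px F) p = fderiv ℝ (fderiv ℝ F) p ((0:ℝ),(1:ℝ)) ((1:ℝ),(0:ℝ)) := by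
    show fderiv ℝ (fun q => fderiv ℝ F q ((1:ℝ),(0:ℝ))) p ((0:ℝ),(1:ℝ)) = _
    rw [key]; rfl
  rw [e1, e2, hsymm]

lemma iteratedDeriv_two_eq {F : ℝ × ℝ → ℝ} (hF : ContDiff ℝ (⊤ : ℕ∞) F) (x t : ℝ) :
    iteratedDeriv 2 (fun y => F (y, t)) x = Px (Px F) (x, t) := by
  have hPx : ContDiff ℝ (⊤ : ℕ∞) (Px F) := contDiff_Px hF
  have h1 : deriv (fun y => F (y, t)) = fun y => Px F (y, t) :=
    funext fun y => deriv_Px hF y t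
  have : iteratedDeriv 2 (fun y => F (y, t)) = deriv (deriv (fun y => F (y, t))) := by
    rw [show (2:ℕ) = 1 + 1 from rfl, iteratedDeriv_succ, iteratedDeriv_one]
  rw [this, h1]
  exact deriv_Px hPx x t

section Alg
variable {v p : ℝ × ℝ} {F G : ℝ × ℝ → ℝ}

lemma Pv_congr (h : F =ᶠ[nhds p] G) : Pv v F p = Pv v G p := by
  simp only [Pv]; rw [h.fderiv_eq]

lemma Pv_of_eventually_zero (h : F =ᶠ[nhds p] fun _ => 0) : Pv v F p = 0 := by
  rw [Pv_congr h]; simp [Pv]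

lemma Pv_add (hF : DifferentiableAt ℝ F p) (hG : DifferentiableAt ℝ G p) :
    Pv v (fun q => F q + G q) p = Pv v F p + Pv v G p := by
  simp only [Pv]; rw [fderiv_fun_add hF hG]; rfl

lemma Pv_sub (hF : DifferentiableAt ℝ F p) (hG : DifferentiableAt ℝ G p) :
    Pv v (fun q => F q - G q) p = Pv v F p - Pv v G p := by
  simp only [Pv]; rw [fderiv_fun_sub hF hG]; rfl

lemma Pv_const_mul (hF : DifferentiableAt ℝ F p) (c : ℝ) :
    Pv v (fun q => c * F q) p = c * Pv v F p := by
  simp only [Pv]; rw [fderiv_const_mul hF]; rfl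

lemma Pv_mul (hF : DifferentiableAt ℝ F p) (hG : DifferentiableAt ℝ G p) :
    Pv v (fun q => F q * G q) p = Pv v F p * G p + F p * Pv v G p := by
  simp only [Pv]; rw [fderiv_fun_mul hF hG]; simp; ring

lemma Pv_sum {s : Finset ℕ} {F : ℕ → ℝ × ℝ → ℝ}
    (hF : ∀ i ∈ s, DifferentiableAt ℝ (F i) p) :
    Pv v (fun q => ∑ i ∈ s, F i q) p = ∑ i ∈ s, Pv v (F i) p := by
  simp only [Pv]; rw [fderiv_fun_sum hF]; simp

end Alg

section Ext
variable {X : Type*} [TopologicalSpace X]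

lemma ext_nonneg {s : Set X} {G : X → ℝ} (hG : Continuous G) (h : ∀ q ∈ s, 0 ≤ G q)
    {p : X} (hp : p ∈ closure s) : 0 ≤ G p :=
  closure_minimal h (isClosed_le continuous_const hG) hp

lemma ext_eq_zero {s : Set X} {G : X → ℝ} (hG : Continuous G) (h : ∀ q ∈ s, G q = 0)
    {p : X} (hp : p ∈ closure s) : G p = 0 :=
  closure_minimal h (isClosed_eq hG continuous_const) hp

end Ext

lemma deriv_nonpos_right {f : ℝ → ℝ} {d a b : ℝ} (hab : a < b) (hd : HasDerivAt f d b)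
    (hmin : ∀ s ∈ Icc a b, f b ≤ f s) : d ≤ 0 := by
  have h1 : Tendsto (slope f b) (nhdsWithin b (Iio b)) (nhds d) :=
    (hasDerivAt_iff_tendsto_slope.mp hd).mono_left
      (nhdsWithin_mono _ fun x (hx : x < b) => (ne_of_lt hx : x ≠ b))
  refine le_of_tendsto h1 ?_
  filter_upwards [Ioo_mem_nhdsLT_of_mem (show b ∈ Ioc a b from ⟨hab, le_refl b⟩)] with s hs
  have hnum : 0 ≤ f s - f b := sub_nonneg.2 (hmin s ⟨hs.1.le, hs.2.le⟩)
  have hden : s - b < 0 := sub_neg.2 hs.2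
  rw [slope_def_field]
  exact div_nonpos_of_nonneg_of_nonpos hnum hden.le

lemma second_deriv_nonneg_at_localmin {f : ℝ → ℝ} {a δ : ℝ} (hf : ContDiff ℝ (⊤ : ℕ∞) f)
    (hδ : 0 < δ) (hmin : ∀ y, |y - a| < δ → f a ≤ f y) : 0 ≤ deriv (deriv f) a := by
  by_contra hcon
  push_neg at hcon
  have hder : ∀ g : ℝ → ℝ, ContDiff ℝ (⊤ : ℕ∞) g → ContDiff ℝ (⊤ : ℕ∞) (deriv g) := by
    intro g hg
    rw [show ((⊤ : ℕ∞) : WithTop ℕ∞) = ((⊤ : ℕ∞) : WithTop ℕ∞) + 1 from rfl] at hg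
    exact (contDiff_succ_iff_deriv.mp hg).2.2
  have hf' : ContDiff ℝ (⊤ : ℕ∞) (deriv f) := hder f hf
  have hf''c : Continuous (deriv (deriv f)) := (hder _ hf').continuous
  have hev : (fun y => deriv (deriv f) y) ⁻¹' Iio 0 ∈ nhds a :=
    hf''c.continuousAt.preimage_mem_nhds (Iio_mem_nhds hcon)
  obtain ⟨η, hη, hball⟩ := Metric.mem_nhds_iff.mp hev
  set r := min δ η / 2 with hrdef
  have hr0 : 0 < r := by positivity
  have hrδ : r < δ := by
    have : min δ η ≤ δ := min_le_left _ _
    simp only [hrdef]; linarith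
  have hrη : r < η := by
    have : min δ η ≤ η := min_le_right _ _
    simp only [hrdef]; linarith
  have hfa' : deriv f a = 0 := by
    have hlm : IsLocalMin f a := by
      filter_upwards [Metric.ball_mem_nhds a hδ] with y hy
      exact hmin y (by simpa [Real.dist_eq] using hy)
    exact hlm.deriv_eq_zero
  have hanti : StrictAntiOn (deriv f) (Icc (a - r) a) := by
    refine strictAntiOn_of_deriv_neg (convex_Icc _ _) hf'.continuous.continuousOn ?_
    intro x hx
    rw [interior_Icc] at hx
    refine hball ?_
    rw [Metric.mem_ball, Real.dist_eq, abs_lt]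
    constructor <;> [linarith [hx.1]; linarith [hx.2, hr0]]
  have hpos : ∀ x ∈ Ico (a - r) a, 0 < deriv f x := by
    intro x hx
    have := hanti ⟨hx.1, hx.2.le⟩ ⟨by linarith [hr0], le_refl a⟩ hx.2
    rwa [hfa'] at this
  have hmono : StrictMonoOn f (Icc (a - r) a) := by
    refine strictMonoOn_of_deriv_pos (convex_Icc _ _) hf.continuous.continuousOn ?_
    intro x hx
    rw [interior_Icc] at hx
    exact hpos x ⟨hx.1.le, hx.2⟩
  have h1 : f (a - r / 2) < f a :=
    hmono ⟨by linarith, by linarith⟩ ⟨by linarith, le_refl a⟩ (by linarith)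
  have h2 : f a ≤ f (a - r / 2) := by
    refine hmin _ ?_
    rw [show a - r / 2 - a = -(r/2) by ring, abs_neg, abs_of_pos (by linarith)]
    linarith
  linarith
section PAlg
variable {p : ℝ × ℝ} {F G : ℝ × ℝ → ℝ}

lemma Pt_add (hF : DifferentiableAt ℝ F p) (hG : DifferentiableAt ℝ G p) :
    Pt (fun q => F q + G q) p = Pt F p + Pt G p := Pv_add hF hG
lemma Px_add (hF : DifferentiableAt ℝ F p) (hG : DifferentiableAt ℝ G p) :
    Px (fun q => F q + G q) p = Px F p + Px G p := Pv_add hF hG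
lemma Pt_sub (hF : DifferentiableAt ℝ F p) (hG : DifferentiableAt ℝ G p) :
    Pt (fun q => F q - G q) p = Pt F p - Pt G p := Pv_sub hF hG
lemma Pt_const_mul (hF : DifferentiableAt ℝ F p) (c : ℝ) :
    Pt (fun q => c * F q) p = c * Pt F p := Pv_const_mul hF c
lemma Px_const_mul (hF : DifferentiableAt ℝ F p) (c : ℝ) :
    Px (fun q => c * F q) p = c * Px F p := Pv_const_mul hF c
lemma Pt_mul (hF : DifferentiableAt ℝ F p) (hG : DifferentiableAt ℝ G p) :
    Pt (fun q => F q * G q) p = Pt F p * G p + F p * Pt G p := Pv_mul hF hG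
lemma Pt_sum {s : Finset ℕ} {F : ℕ → ℝ × ℝ → ℝ}
    (hF : ∀ i ∈ s, DifferentiableAt ℝ (F i) p) :
    Pt (fun q => ∑ i ∈ s, F i q) p = ∑ i ∈ s, Pt (F i) p := Pv_sum hF
lemma Pt_eventually_zero (h : F =ᶠ[nhds p] fun _ => 0) : Pt F p = 0 :=
  Pv_of_eventually_zero h

end PAlg
lemma maxPrinciple (n : ℕ) (hn : 1 ≤ n) (T : ℝ) (hT : 0 < T)
    (a : ℕ → ℕ → ℝ × ℝ → ℝ) (ε : ℕ → ℝ)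
    (hε : ∀ i ∈ Finset.Icc 1 n, 0 < ε i)
    (haoff : ∀ i ∈ Finset.Icc 1 n, ∀ j ∈ Finset.Icc 1 n, i ≠ j →
      ∀ p ∈ Icc (0:ℝ) 1 ×ˢ Icc (0:ℝ) T, a i j p ≤ 0)
    (hasum : ∀ p ∈ Icc (0:ℝ) 1 ×ˢ Icc (0:ℝ) T, ∀ i ∈ Finset.Icc 1 n,
      0 < ∑ j ∈ Finset.Icc 1 n, a i j p)
    (g : ℕ → ℝ × ℝ → ℝ) (hg : ∀ i ∈ Finset.Icc 1 n, ContDiff ℝ (⊤ : ℕ∞) (g i))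
    (hpde : ∀ i ∈ Finset.Icc 1 n, ∀ p : ℝ × ℝ, p.1 ∈ Ioo (0:ℝ) 1 → p.2 ∈ Ioo (0:ℝ) T →
      0 ≤ Pt (g i) p - ε i * Px (Px (g i)) p + ∑ j ∈ Finset.Icc 1 n, a i j p * g j p)
    (hbdry : ∀ i ∈ Finset.Icc 1 n, ∀ p ∈ Icc (0:ℝ) 1 ×ˢ Icc (0:ℝ) T,
      (p.1 = 0 ∨ p.1 = 1 ∨ p.2 = 0) → 0 ≤ g i p) :
    ∀ i ∈ Finset.Icc 1 n, ∀ p ∈ Icc (0:ℝ) 1 ×ˢ Icc (0:ℝ) T, 0 ≤ g i p := by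
  classical
  have step : ∀ T', 0 < T' → T' < T →
      ∀ i ∈ Finset.Icc 1 n, ∀ p ∈ Icc (0:ℝ) 1 ×ˢ Icc (0:ℝ) T', 0 ≤ g i p := by
    intro T' hT'0 hT'T
    set K : Set (ℝ × ℝ) := Icc (0:ℝ) 1 ×ˢ Icc (0:ℝ) T' with hKdef
    have hKc : IsCompact K := isCompact_Icc.prod isCompact_Icc
    have hKne : K.Nonempty := ⟨(0, 0), ⟨⟨le_refl 0, zero_le_one⟩, ⟨le_refl 0, hT'0.le⟩⟩⟩
    have hKsub : K ⊆ Icc (0:ℝ) 1 ×ˢ Icc (0:ℝ) T :=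
      prod_mono_right (Icc_subset_Icc le_rfl hT'T.le)
    have hmin : ∀ i ∈ Finset.Icc 1 n, ∃ p ∈ K, ∀ q ∈ K, g i p ≤ g i q := by
      intro i hi
      obtain ⟨p, hpK, hp⟩ := hKc.exists_isMinOn hKne (hg i hi).continuous.continuousOn
      exact ⟨p, hpK, fun q hq => hp hq⟩
    choose! P hPK hPmin using hmin
    obtain ⟨i₀, hi₀s, hi₀min⟩ := Finset.exists_min_image (Finset.Icc 1 n)
      (fun i => g i (P i)) ⟨1, Finset.mem_Icc.mpr ⟨le_refl 1, hn⟩⟩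
    set p₀ := P i₀ with hp₀def
    set m := g i₀ p₀ with hmdef
    have hp₀K : p₀ ∈ K := hPK i₀ hi₀s
    have hglob : ∀ j ∈ Finset.Icc 1 n, ∀ q ∈ K, m ≤ g j q := fun j hj q hq =>
      le_trans (hi₀min j hj) (hPmin j hj q hq)
    rcases le_or_gt 0 m with hm | hm
    · intro i hi p hp; exact le_trans hm (hglob i hi p hp)
    · exfalso
      have hx₀ : p₀.1 ∈ Icc (0:ℝ) 1 := hp₀K.1
      have ht₀ : p₀.2 ∈ Icc (0:ℝ) T' := hp₀K.2
      have hxne0 : p₀.1 ≠ 0 := fun h =>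
        absurd (hbdry i₀ hi₀s p₀ (hKsub hp₀K) (Or.inl h)) (not_le.mpr hm)
      have hxne1 : p₀.1 ≠ 1 := fun h =>
        absurd (hbdry i₀ hi₀s p₀ (hKsub hp₀K) (Or.inr (Or.inl h))) (not_le.mpr hm)
      have htne0 : p₀.2 ≠ 0 := fun h =>
        absurd (hbdry i₀ hi₀s p₀ (hKsub hp₀K) (Or.inr (Or.inr h))) (not_le.mpr hm)
      have hx₀o : p₀.1 ∈ Ioo (0:ℝ) 1 :=
        ⟨lt_of_le_of_ne hx₀.1 (Ne.symm hxne0), lt_of_le_of_ne hx₀.2 hxne1⟩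
      have ht₀o : (0:ℝ) < p₀.2 := lt_of_le_of_ne ht₀.1 (Ne.symm htne0)
      have hgi := hg i₀ hi₀s
      have hPt : Pt (g i₀) p₀ ≤ 0 := by
        refine deriv_nonpos_right (f := fun s => g i₀ (p₀.1, s)) (a := 0) ht₀o ?_ ?_
        · have := hasDerivAt_Pt hgi p₀.1 p₀.2
          simpa using this
        · intro s hs
          have hsK : (p₀.1, s) ∈ K := ⟨hx₀, ⟨hs.1, le_trans hs.2 ht₀.2⟩⟩
          have := hglob i₀ hi₀s (p₀.1, s) hsK
          simpa [hmdef] using this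
      have hPxx : 0 ≤ Px (Px (g i₀)) p₀ := by
        have hfc : ContDiff ℝ (⊤ : ℕ∞) (fun y => g i₀ (y, p₀.2)) :=
          hgi.comp (contDiff_id.prodMk contDiff_const)
        have hδ0 : 0 < min p₀.1 (1 - p₀.1) := lt_min hx₀o.1 (by linarith [hx₀o.2])
        have h2 := second_deriv_nonneg_at_localmin (a := p₀.1) (δ := min p₀.1 (1 - p₀.1)) hfc hδ0 (fun y hy => by
          have h1 := abs_lt.mp hy
          have hy0 : 0 ≤ y := by
            have := min_le_left p₀.1 (1 - p₀.1); linarith [h1.1]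
          have hy1 : y ≤ 1 := by
            have := min_le_right p₀.1 (1 - p₀.1); linarith [h1.2]
          have hyK : (y, p₀.2) ∈ K := ⟨⟨hy0, hy1⟩, ht₀⟩
          have := hglob i₀ hi₀s (y, p₀.2) hyK
          simpa [hmdef] using this)
        have hd1 : deriv (fun y => g i₀ (y, p₀.2)) = fun y => Px (g i₀) (y, p₀.2) :=
          funext fun y => deriv_Px hgi y p₀.2
        rw [hd1] at h2
        have hd2 : deriv (fun y => Px (g i₀) (y, p₀.2)) p₀.1 = Px (Px (g i₀)) (p₀.1, p₀.2) :=
          deriv_Px (contDiff_Px hgi) p₀.1 p₀.2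
        rw [hd2] at h2
        simpa using h2
      have hpde₀ := hpde i₀ hi₀s p₀ hx₀o ⟨ht₀o, lt_of_le_of_lt ht₀.2 hT'T⟩
      have hsum_le : ∑ j ∈ Finset.Icc 1 n, a i₀ j p₀ * g j p₀ ≤
          (∑ j ∈ Finset.Icc 1 n, a i₀ j p₀) * m := by
        rw [Finset.sum_mul]
        refine Finset.sum_le_sum ?_
        intro j hj
        rcases eq_or_ne j i₀ with h | h
        · subst h; exact le_of_eq rfl
        · have ha := haoff i₀ hi₀s j hj (Ne.symm h) p₀ (hKsub hp₀K)
          exact mul_le_mul_of_nonpos_left (hglob j hj p₀ hp₀K) ha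
      have hS : 0 < ∑ j ∈ Finset.Icc 1 n, a i₀ j p₀ := hasum p₀ (hKsub hp₀K) i₀ hi₀s
      have hneg : (∑ j ∈ Finset.Icc 1 n, a i₀ j p₀) * m < 0 := mul_neg_of_pos_of_neg hS hm
      have hε₀ := hε i₀ hi₀s
      nlinarith [mul_nonneg hε₀.le hPxx]
  have step2 : ∀ i ∈ Finset.Icc 1 n, ∀ p : ℝ × ℝ,
      p.1 ∈ Icc (0:ℝ) 1 → p.2 ∈ Ico (0:ℝ) T → 0 ≤ g i p := by
    intro i hi p hx ht
    rcases eq_or_lt_of_le ht.1 with h0 | h0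
    · exact hbdry i hi p ⟨hx, ⟨ht.1, ht.2.le⟩⟩ (Or.inr (Or.inr h0.symm))
    · refine step ((p.2 + T) / 2) (by linarith [ht.1]) (by linarith [ht.2]) i hi p
        ⟨hx, ⟨ht.1, by linarith [ht.2]⟩⟩
  intro i hi p hp
  rcases eq_or_lt_of_le hp.2.2 with hEq | hlt
  · have hc : Continuous fun s => g i (p.1, s) :=
      (hg i hi).continuous.comp (continuous_const.prodMk continuous_id)
    have h1 : ∀ s ∈ Ico (0:ℝ) T, 0 ≤ g i (p.1, s) := fun s hs =>
      step2 i hi (p.1, s) hp.1 hs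
    have h2 : (0:ℝ) ≤ g i (p.1, T) := by
      refine ext_nonneg hc h1 ?_
      rw [closure_Ico hT.ne]
      exact ⟨hT.le, le_refl T⟩
    have : p = (p.1, T) := by rw [← hEq]
    rw [this]; exact h2
  · exact step2 i hi p hp.1 ⟨hp.2.1, hlt⟩
lemma odeMaxPrinciple (n : ℕ) (hn : 1 ≤ n) (T : ℝ) (hT : 0 < T)
    (c : ℕ → ℕ → ℝ → ℝ)
    (hcoff : ∀ i ∈ Finset.Icc 1 n, ∀ j ∈ Finset.Icc 1 n, i ≠ j →
      ∀ t ∈ Icc (0:ℝ) T, c i j t ≤ 0)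
    (hcsum : ∀ t ∈ Icc (0:ℝ) T, ∀ i ∈ Finset.Icc 1 n,
      0 < ∑ j ∈ Finset.Icc 1 n, c i j t)
    (g : ℕ → ℝ → ℝ) (hg : ∀ i ∈ Finset.Icc 1 n, ContDiff ℝ (⊤ : ℕ∞) (g i))
    (hode : ∀ i ∈ Finset.Icc 1 n, ∀ t : ℝ, 0 < t → t ≤ T →
      0 ≤ deriv (g i) t + ∑ j ∈ Finset.Icc 1 n, c i j t * g j t)
    (h0 : ∀ i ∈ Finset.Icc 1 n, 0 ≤ g i 0) :
    ∀ i ∈ Finset.Icc 1 n, ∀ t ∈ Icc (0:ℝ) T, 0 ≤ g i t := by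
  classical
  have hKc : IsCompact (Icc (0:ℝ) T) := isCompact_Icc
  have hKne : (Icc (0:ℝ) T).Nonempty := ⟨0, ⟨le_refl 0, hT.le⟩⟩
  have hmin : ∀ i ∈ Finset.Icc 1 n, ∃ t ∈ Icc (0:ℝ) T, ∀ s ∈ Icc (0:ℝ) T, g i t ≤ g i s := by
    intro i hi
    obtain ⟨t, htK, ht⟩ := hKc.exists_isMinOn hKne (hg i hi).continuous.continuousOn
    exact ⟨t, htK, fun s hs => ht hs⟩
  choose! P hPK hPmin using hmin
  obtain ⟨i₀, hi₀s, hi₀min⟩ := Finset.exists_min_image (Finset.Icc 1 n)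
    (fun i => g i (P i)) ⟨1, Finset.mem_Icc.mpr ⟨le_refl 1, hn⟩⟩
  set t₀ := P i₀ with ht₀def
  set m := g i₀ t₀ with hmdef
  have ht₀K : t₀ ∈ Icc (0:ℝ) T := hPK i₀ hi₀s
  have hglob : ∀ j ∈ Finset.Icc 1 n, ∀ s ∈ Icc (0:ℝ) T, m ≤ g j s := fun j hj s hs =>
    le_trans (hi₀min j hj) (hPmin j hj s hs)
  rcases le_or_gt 0 m with hm | hm
  · intro i hi t ht; exact le_trans hm (hglob i hi t ht)
  · exfalso
    have htne0 : t₀ ≠ 0 := fun h => absurd (h ▸ h0 i₀ hi₀s) (not_le.mpr hm)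
    have ht₀o : (0:ℝ) < t₀ := lt_of_le_of_ne ht₀K.1 (Ne.symm htne0)
    have hd : deriv (g i₀) t₀ ≤ 0 := by
      refine deriv_nonpos_right (f := g i₀) (a := 0) ht₀o
        (((hg i₀ hi₀s).differentiable (by simp) t₀).hasDerivAt) ?_
      intro s hs
      exact hglob i₀ hi₀s s ⟨hs.1, le_trans hs.2 ht₀K.2⟩
    have hode₀ := hode i₀ hi₀s t₀ ht₀o ht₀K.2
    have hsum_le : ∑ j ∈ Finset.Icc 1 n, c i₀ j t₀ * g j t₀ ≤
        (∑ j ∈ Finset.Icc 1 n, c i₀ j t₀) * m := by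
      rw [Finset.sum_mul]
      refine Finset.sum_le_sum ?_
      intro j hj
      rcases eq_or_ne j i₀ with h | h
      · subst h; exact le_of_eq rfl
      · exact mul_le_mul_of_nonpos_left (hglob j hj t₀ ht₀K)
          (hcoff i₀ hi₀s j hj (Ne.symm h) t₀ ht₀K)
    have hS : 0 < ∑ j ∈ Finset.Icc 1 n, c i₀ j t₀ := hcsum t₀ ht₀K i₀ hi₀s
    nlinarith [mul_neg_of_pos_of_neg hS hm]
section Barrier

variable (M β : ℝ)

lemma contDiff_barrier :
    ContDiff ℝ (⊤ : ℕ∞) (fun q : ℝ × ℝ => M * Real.exp q.2 * Real.exp (-β * q.1)) := by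
  have h1 : ContDiff ℝ (⊤ : ℕ∞) (fun q : ℝ × ℝ => Real.exp q.2) :=
    Real.contDiff_exp.comp contDiff_snd
  have h2 : ContDiff ℝ (⊤ : ℕ∞) (fun q : ℝ × ℝ => Real.exp (-β * q.1)) :=
    Real.contDiff_exp.comp (contDiff_const.mul contDiff_fst)
  exact (contDiff_const.mul h1).mul h2

lemma Pt_barrier (p : ℝ × ℝ) :
    Pt (fun q : ℝ × ℝ => M * Real.exp q.2 * Real.exp (-β * q.1)) p =
      M * Real.exp p.2 * Real.exp (-β * p.1) := by
  have hd : HasDerivAt (fun s => M * Real.exp s * Real.exp (-β * p.1))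
      (M * Real.exp p.2 * Real.exp (-β * p.1)) p.2 := by
    exact ((Real.hasDerivAt_exp p.2).const_mul M).mul_const (Real.exp (-β * p.1))
  calc Pt (fun q : ℝ × ℝ => M * Real.exp q.2 * Real.exp (-β * q.1)) p
      = deriv (fun s => M * Real.exp s * Real.exp (-β * p.1)) p.2 :=
        (deriv_Pt (contDiff_barrier M β) p.1 p.2).symm
    _ = M * Real.exp p.2 * Real.exp (-β * p.1) := hd.deriv

lemma Px_barrier (p : ℝ × ℝ) :
    Px (fun q : ℝ × ℝ => M * Real.exp q.2 * Real.exp (-β * q.1)) p =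
      -β * (M * Real.exp p.2 * Real.exp (-β * p.1)) := by
  have hd : HasDerivAt (fun y => M * Real.exp p.2 * Real.exp (-β * y))
      (-β * (M * Real.exp p.2 * Real.exp (-β * p.1))) p.1 := by
    have h1 : HasDerivAt (fun y : ℝ => -β * y) (-β) p.1 := by
      simpa using (hasDerivAt_id p.1).const_mul (-β)
    have h2 : HasDerivAt (fun y => Real.exp (-β * y)) (Real.exp (-β * p.1) * (-β)) p.1 :=
      h1.exp
    have h3 := h2.const_mul (M * Real.exp p.2)
    exact h3.congr_deriv (by ring)
  calc Px (fun q : ℝ × ℝ => M * Real.exp q.2 * Real.exp (-β * q.1)) p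
      = deriv (fun y => M * Real.exp p.2 * Real.exp (-β * y)) p.1 :=
        (deriv_Px (contDiff_barrier M β) p.1 p.2).symm
    _ = -β * (M * Real.exp p.2 * Real.exp (-β * p.1)) := hd.deriv

lemma PxPx_barrier (p : ℝ × ℝ) :
    Px (Px (fun q : ℝ × ℝ => M * Real.exp q.2 * Real.exp (-β * q.1))) p =
      β ^ 2 * (M * Real.exp p.2 * Real.exp (-β * p.1)) := by
  have hfun : Px (fun q : ℝ × ℝ => M * Real.exp q.2 * Real.exp (-β * q.1)) =
      fun q : ℝ × ℝ => -β * (M * Real.exp q.2 * Real.exp (-β * q.1)) :=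
    funext fun q => Px_barrier M β q
  rw [hfun]
  have hdiff : DifferentiableAt ℝ (fun q : ℝ × ℝ => M * Real.exp q.2 * Real.exp (-β * q.1)) p :=
    ((contDiff_barrier M β).differentiable (by simp)) p
  have h2 : Px (fun q : ℝ × ℝ => -β *
      ((fun r : ℝ × ℝ => M * Real.exp r.2 * Real.exp (-β * r.1)) q)) p =
      -β * Px (fun r : ℝ × ℝ => M * Real.exp r.2 * Real.exp (-β * r.1)) p :=
    Px_const_mul hdiff (-β)
  rw [h2, Px_barrier M β p]
  ring

end Barrier
lemma layerBound (n : ℕ) (hn : 1 ≤ n) (T α β : ℝ) (hT : 0 < T) (hα : 0 < α) (hβ : 0 ≤ β)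
    (a : ℕ → ℕ → ℝ × ℝ → ℝ) (ε : ℕ → ℝ)
    (hε : ∀ i ∈ Finset.Icc 1 n, 0 < ε i)
    (hkey : ∀ i ∈ Finset.Icc 1 n, ε i * β ^ 2 ≤ α)
    (haoff : ∀ i ∈ Finset.Icc 1 n, ∀ j ∈ Finset.Icc 1 n, i ≠ j →
      ∀ p ∈ Icc (0:ℝ) 1 ×ˢ Icc (0:ℝ) T, a i j p ≤ 0)
    (hasum : ∀ p ∈ Icc (0:ℝ) 1 ×ˢ Icc (0:ℝ) T, ∀ i ∈ Finset.Icc 1 n,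
      α < ∑ j ∈ Finset.Icc 1 n, a i j p)
    (h : ℕ → ℝ × ℝ → ℝ) (hh : ∀ i ∈ Finset.Icc 1 n, ContDiff ℝ (⊤ : ℕ∞) (h i))
    (DL Ssrc : ℝ) (hDL : 0 ≤ DL) (hSsrc : 0 ≤ Ssrc)
    (hpde : ∀ i ∈ Finset.Icc 1 n, ∀ p : ℝ × ℝ, p.1 ∈ Ioo (0:ℝ) 1 → p.2 ∈ Ioo (0:ℝ) T →
      |Pt (h i) p - ε i * Px (Px (h i)) p + ∑ j ∈ Finset.Icc 1 n, a i j p * h j p|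
        ≤ Ssrc * Real.exp (-β * p.1))
    (hb0 : ∀ i ∈ Finset.Icc 1 n, ∀ x ∈ Icc (0:ℝ) 1, h i (x, 0) = 0)
    (hb1 : ∀ i ∈ Finset.Icc 1 n, ∀ t ∈ Icc (0:ℝ) T, h i (1, t) = 0)
    (hbL : ∀ i ∈ Finset.Icc 1 n, ∀ t ∈ Icc (0:ℝ) T, |h i (0, t)| ≤ DL) :
    ∀ i ∈ Finset.Icc 1 n, ∀ p ∈ Icc (0:ℝ) 1 ×ˢ Icc (0:ℝ) T,
      |h i p| ≤ (DL + Ssrc + 1) * Real.exp T * Real.exp (-β * p.1) := by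
  set M := DL + Ssrc + 1 with hMdef
  have hM1 : 1 ≤ M := by simp only [hMdef]; linarith
  set b : ℝ × ℝ → ℝ := fun q => M * Real.exp q.2 * Real.exp (-β * q.1) with hbdef
  have hbc : ContDiff ℝ (⊤ : ℕ∞) b := contDiff_barrier M β
  have key : ∀ σ : ℝ, σ = 1 ∨ σ = -1 →
      ∀ i ∈ Finset.Icc 1 n, ∀ p ∈ Icc (0:ℝ) 1 ×ˢ Icc (0:ℝ) T, 0 ≤ b p + σ * h i p := by
    intro σ hσ
    refine maxPrinciple n hn T hT a ε hε haoff
      (fun p hp i hi => lt_trans hα (hasum p hp i hi))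
      (fun i q => b q + σ * h i q)
      (fun i hi => hbc.add (contDiff_const.mul (hh i hi))) ?_ ?_
    · intro i hi p hx ht
      have hhc := hh i hi
      have hbd : DifferentiableAt ℝ b p := hbc.differentiable (by simp) p
      have hhd : DifferentiableAt ℝ (h i) p := hhc.differentiable (by simp) p
      have e1 : Pt (fun q => b q + σ * h i q) p = Pt b p + σ * Pt (h i) p := by
        rw [Pt_add hbd (hhd.const_mul σ), Pt_const_mul hhd σ]
      have e2 : Px (Px (fun q => b q + σ * h i q)) p = Px (Px b) p + σ * Px (Px (h i)) p := by
        have hfun : Px (fun q => b q + σ * h i q) =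
            fun q => Px b q + σ * Px (h i) q := funext fun q => by
          rw [Px_add (hbc.differentiable (by simp) q)
            (((hh i hi).differentiable (by simp) q).const_mul σ),
            Px_const_mul ((hh i hi).differentiable (by simp) q) σ]
        rw [hfun,
          Px_add ((contDiff_Px hbc).differentiable (by simp) p)
            (((contDiff_Px hhc).differentiable (by simp) p).const_mul σ),
          Px_const_mul ((contDiff_Px hhc).differentiable (by simp) p) σ]
      have e3 : ∑ j ∈ Finset.Icc 1 n, a i j p * (b p + σ * h j p) =
          (∑ j ∈ Finset.Icc 1 n, a i j p) * b p +
            σ * ∑ j ∈ Finset.Icc 1 n, a i j p * h j p := by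
        calc ∑ j ∈ Finset.Icc 1 n, a i j p * (b p + σ * h j p)
            = ∑ j ∈ Finset.Icc 1 n, (a i j p * b p + σ * (a i j p * h j p)) :=
              Finset.sum_congr rfl fun j _ => by ring
          _ = _ := by rw [Finset.sum_add_distrib, ← Finset.sum_mul, ← Finset.mul_sum]
      show 0 ≤ Pt (fun q => b q + σ * h i q) p -
          ε i * Px (Px (fun q => b q + σ * h i q)) p +
          ∑ j ∈ Finset.Icc 1 n, a i j p * (b p + σ * h j p)
      rw [e1, e2, e3]
      have hbv : Pt b p = b p := Pt_barrier M β p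
      have hbxx : Px (Px b) p = β ^ 2 * b p := PxPx_barrier M β p
      rw [hbv, hbxx]
      set E := Pt (h i) p - ε i * Px (Px (h i)) p +
        ∑ j ∈ Finset.Icc 1 n, a i j p * h j p with hEdef
      set Sa := ∑ j ∈ Finset.Icc 1 n, a i j p with hSadef
      have hfactor : b p + σ * Pt (h i) p - ε i * (β ^ 2 * b p + σ * Px (Px (h i)) p) +
          (Sa * b p + σ * ∑ j ∈ Finset.Icc 1 n, a i j p * h j p) =
          b p * (1 - ε i * β ^ 2 + Sa) + σ * E := by
        simp only [hEdef]; ring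
      rw [hfactor]
      have hpR : p ∈ Icc (0:ℝ) 1 ×ˢ Icc (0:ℝ) T :=
        ⟨⟨hx.1.le, hx.2.le⟩, ⟨ht.1.le, ht.2.le⟩⟩
      have hfac1 : 1 ≤ 1 - ε i * β ^ 2 + Sa := by
        have := hkey i hi
        have := hasum p hpR i hi
        simp only [hSadef]; linarith
      have hEbd := hpde i hi p hx ht
      have hσE : -(Ssrc * Real.exp (-β * p.1)) ≤ σ * E := by
        rcases hσ with h1 | h1 <;> subst h1
        · have := (abs_le.mp hEbd).1; linarith
        · have := (abs_le.mp hEbd).2; linarith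
      have hbnn : 0 ≤ b p := by
        simp only [hbdef]
        positivity
      have hbge : M * Real.exp (-β * p.1) ≤ b p := by
        have h1 : 1 ≤ Real.exp p.2 := Real.one_le_exp ht.1.le
        have h2 : M * 1 ≤ M * Real.exp p.2 :=
          mul_le_mul_of_nonneg_left h1 (by linarith)
        calc M * Real.exp (-β * p.1) = M * 1 * Real.exp (-β * p.1) := by ring
          _ ≤ M * Real.exp p.2 * Real.exp (-β * p.1) :=
            mul_le_mul_of_nonneg_right h2 (Real.exp_nonneg _)
          _ = b p := rfl
      have hbb : b p * 1 ≤ b p * (1 - ε i * β ^ 2 + Sa) :=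
        mul_le_mul_of_nonneg_left hfac1 hbnn
      have hMS : Ssrc * Real.exp (-β * p.1) ≤ M * Real.exp (-β * p.1) :=
        mul_le_mul_of_nonneg_right (by linarith) (Real.exp_nonneg _)
      linarith
    · intro i hi p hp hedge
      have hx : p.1 ∈ Icc (0:ℝ) 1 := hp.1
      have ht : p.2 ∈ Icc (0:ℝ) T := hp.2
      rcases hedge with hx0 | hx1 | ht0
      · have hpe : p = (0, p.2) := by rw [← hx0]
        rw [hpe]
        show 0 ≤ b (0, p.2) + σ * h i (0, p.2)
        have hb0v : b (0, p.2) = M * Real.exp p.2 := by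
          simp only [hbdef]; norm_num
        rw [hb0v]
        have hhb := hbL i hi p.2 ht
        have h1 : 1 ≤ Real.exp p.2 := Real.one_le_exp ht.1
        have h2 : M * 1 ≤ M * Real.exp p.2 :=
          mul_le_mul_of_nonneg_left h1 (by linarith)
        have h3 := abs_le.mp hhb
        rcases hσ with hσ1 | hσ1 <;> subst hσ1 <;> simp only [one_mul, neg_one_mul] <;>
          [linarith [h3.1]; linarith [h3.2]]
      · have hpe : p = (1, p.2) := by rw [← hx1]
        rw [hpe]
        show 0 ≤ b (1, p.2) + σ * h i (1, p.2)
        rw [hb1 i hi p.2 ht]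
        have : 0 ≤ b (1, p.2) := by simp only [hbdef]; positivity
        linarith
      · have hpe : p = (p.1, 0) := by rw [← ht0]
        rw [hpe]
        show 0 ≤ b (p.1, 0) + σ * h i (p.1, 0)
        rw [hb0 i hi p.1 hx]
        have : 0 ≤ b (p.1, 0) := by simp only [hbdef]; positivity
        linarith
  intro i hi p hp
  have h1 := key 1 (Or.inl rfl) i hi p hp
  have h2 := key (-1) (Or.inr rfl) i hi p hp
  have hble : b p ≤ M * Real.exp T * Real.exp (-β * p.1) := by
    have he : Real.exp p.2 ≤ Real.exp T := Real.exp_le_exp.2 hp.2.2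
    exact mul_le_mul_of_nonneg_right
      (mul_le_mul_of_nonneg_left he (by linarith)) (Real.exp_nonneg _)
  rw [abs_le]
  constructor
  · simp only [one_mul] at h1; linarith
  · simp only [neg_one_mul] at h2; linarith
lemma Pv_const (v : ℝ × ℝ) (c : ℝ) (p : ℝ × ℝ) : Pv v (fun _ => c) p = 0 := by
  simp only [Pv]
  rw [fderiv_const_apply]
  rfl

lemma Pt_const (c : ℝ) (p : ℝ × ℝ) : Pt (fun _ => c) p = 0 := Pv_const _ c p
lemma Px_const (c : ℝ) (p : ℝ × ℝ) : Px (fun _ => c) p = 0 := Pv_const _ c p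

lemma vert_step {T : ℝ} (hT : 0 < T) {c : ℝ} {F G : ℝ × ℝ → ℝ}
    (hF : ContDiff ℝ (⊤ : ℕ∞) F) (hG : ContDiff ℝ (⊤ : ℕ∞) G)
    (h : ∀ s ∈ Icc (0:ℝ) T, F (c, s) = G (c, s)) :
    ∀ t ∈ Icc (0:ℝ) T, Pt F (c, t) = Pt G (c, t) := by
  have h1 : ∀ t ∈ Ioo (0:ℝ) T, Pt F (c, t) = Pt G (c, t) := by
    intro t ht
    rw [← deriv_Pt hF c t, ← deriv_Pt hG c t]
    have hev : (fun s => F (c, s)) =ᶠ[nhds t] fun s => G (c, s) :=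
      Filter.eventually_of_mem (isOpen_Ioo.mem_nhds ht) fun z hz => h z ⟨hz.1.le, hz.2.le⟩
    exact hev.deriv_eq
  intro t ht
  have hcont : Continuous (fun s => Pt F (c, s) - Pt G (c, s)) :=
    (((contDiff_Pt hF).continuous.comp (continuous_const.prodMk continuous_id)).sub
      ((contDiff_Pt hG).continuous.comp (continuous_const.prodMk continuous_id)))
  have h2 := ext_eq_zero (s := Ioo (0:ℝ) T) hcont
    (fun s hs => sub_eq_zero.mpr (h1 s hs)) (p := t)
    (by rw [closure_Ioo hT.ne]; exact ht)
  exact sub_eq_zero.mp h2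

lemma horiz_step {F G : ℝ × ℝ → ℝ}
    (hF : ContDiff ℝ (⊤ : ℕ∞) F) (hG : ContDiff ℝ (⊤ : ℕ∞) G)
    (h : ∀ x ∈ Icc (0:ℝ) 1, F (x, 0) = G (x, 0)) :
    ∀ x ∈ Icc (0:ℝ) 1, Px F (x, 0) = Px G (x, 0) := by
  have h1 : ∀ x ∈ Ioo (0:ℝ) 1, Px F (x, 0) = Px G (x, 0) := by
    intro x hx
    rw [← deriv_Px hF x 0, ← deriv_Px hG x 0]
    have hev : (fun y => F (y, 0)) =ᶠ[nhds x] fun y => G (y, 0) :=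
      Filter.eventually_of_mem (isOpen_Ioo.mem_nhds hx) fun z hz => h z ⟨hz.1.le, hz.2.le⟩
    exact hev.deriv_eq
  intro x hx
  have hcont : Continuous (fun y => Px F (y, 0) - Px G (y, 0)) :=
    (((contDiff_Px hF).continuous.comp (continuous_id.prodMk continuous_const)).sub
      (((contDiff_Px hG).continuous.comp (continuous_id.prodMk continuous_const))))
  have h2 := ext_eq_zero (s := Ioo (0:ℝ) 1) hcont
    (fun y hy => sub_eq_zero.mpr (h1 y hy)) (p := x)
    (by rw [closure_Ioo (by norm_num : (0:ℝ) ≠ 1)]; exact hx)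
  exact sub_eq_zero.mp h2

lemma PxPx_zero_seg {F : ℝ × ℝ → ℝ} (hF : ContDiff ℝ (⊤ : ℕ∞) F)
    (h0 : ∀ x ∈ Icc (0:ℝ) 1, F (x, 0) = 0) :
    ∀ x ∈ Icc (0:ℝ) 1, Px (Px F) (x, 0) = 0 := by
  have h1 := horiz_step hF contDiff_const (G := fun _ => (0:ℝ))
    (fun x hx => by rw [h0 x hx])
  have h2 := horiz_step (contDiff_Px hF) contDiff_const (G := fun _ => (0:ℝ))
    (fun x hx => by rw [h1 x hx, Px_const])
  intro x hx
  rw [h2 x hx, Px_const]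

lemma horiz_ext_zero {F : ℝ × ℝ → ℝ} (hF : Continuous F)
    (h : ∀ x ∈ Ioo (0:ℝ) 1, F (x, 0) = 0) : ∀ x ∈ Icc (0:ℝ) 1, F (x, 0) = 0 := by
  intro x hx
  exact ext_eq_zero (s := Ioo (0:ℝ) 1)
    (hF.comp (continuous_id.prodMk continuous_const)) h (p := x)
    (by rw [closure_Ioo (by norm_num : (0:ℝ) ≠ 1)]; exact hx)

set_option maxHeartbeats 2000000 in
/-- **Bounds on the left singular component and its time derivatives**
(part of Lemma 8 of the paper).  With `A`, `f` and boundary data `φ` fixed,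
there is a constant `C` independent of `ε₁,…,εₙ` such that the left singular
component `w = w^L` (solution of `Lw = 0` on `Ω` with `w = u − v` on `Γ_L` and
`w = 0` on `Γ_B ∪ Γ_R`) satisfies
`|∂ₜ^l w_i(x,t)| ≤ C·B_n^L(x) = C·exp(−x√(α/ε_n))` for `l = 0,1,2`. -/
theorem stmt_5
    (n : ℕ) (hn : 1 ≤ n) (T : ℝ) (hT : 0 < T)
    (A : ℕ → ℕ → ℝ → ℝ → ℝ)
    (hAsmooth : ∀ i ∈ Finset.Icc 1 n, ∀ j ∈ Finset.Icc 1 n,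
      ContDiff ℝ (⊤ : ℕ∞) (fun p : ℝ × ℝ => A i j p.1 p.2))
    (hAdiag : ∀ i ∈ Finset.Icc 1 n, ∀ x ∈ Set.Icc (0:ℝ) 1, ∀ t ∈ Set.Icc (0:ℝ) T,
      ∑ j ∈ (Finset.Icc 1 n).erase i, |A i j x t| < A i i x t)
    (hAoff : ∀ i ∈ Finset.Icc 1 n, ∀ j ∈ Finset.Icc 1 n, i ≠ j →
      ∀ x ∈ Set.Icc (0:ℝ) 1, ∀ t ∈ Set.Icc (0:ℝ) T, A i j x t ≤ 0)
    (α : ℝ) (hα : 0 < α)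
    (hαA : ∀ x ∈ Set.Icc (0:ℝ) 1, ∀ t ∈ Set.Icc (0:ℝ) T, ∀ i ∈ Finset.Icc 1 n,
      α < ∑ j ∈ Finset.Icc 1 n, A i j x t)
    (f φ : ℕ → ℝ → ℝ → ℝ)
    (hfsmooth : ∀ i ∈ Finset.Icc 1 n, ContDiff ℝ (⊤ : ℕ∞) (fun p : ℝ × ℝ => f i p.1 p.2))
    (hφsmooth : ∀ i ∈ Finset.Icc 1 n, ContDiff ℝ (⊤ : ℕ∞) (fun p : ℝ × ℝ => φ i p.1 p.2)) :
    ∃ C : ℝ, 0 < C ∧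
      ∀ ε : ℕ → ℝ,
        (∀ i ∈ Finset.Icc 1 n, 0 < ε i) →
        (∀ i ∈ Finset.Icc 1 n, ε i ≤ 1) →
        (∀ i j : ℕ, 1 ≤ i → i < j → j ≤ n → ε i < ε j) →
        ∀ u u₀ v w : ℕ → ℝ → ℝ → ℝ,
          (∀ i ∈ Finset.Icc 1 n, ContDiff ℝ (⊤ : ℕ∞) (fun p : ℝ × ℝ => u i p.1 p.2)) →
          (∀ i ∈ Finset.Icc 1 n, ContDiff ℝ (⊤ : ℕ∞) (fun p : ℝ × ℝ => u₀ i p.1 p.2)) →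
          (∀ i ∈ Finset.Icc 1 n, ContDiff ℝ (⊤ : ℕ∞) (fun p : ℝ × ℝ => v i p.1 p.2)) →
          (∀ i ∈ Finset.Icc 1 n, ContDiff ℝ (⊤ : ℕ∞) (fun p : ℝ × ℝ => w i p.1 p.2)) →
          -- `u` solves `Lu = f` on `Ω` with `u = φ` on `Γ`
          (∀ i ∈ Finset.Icc 1 n, ∀ x t : ℝ, 0 < x → x < 1 → 0 < t → t ≤ T →
            deriv (fun s => u i x s) t - ε i * iteratedDeriv 2 (fun y => u i y t) x
              + ∑ j ∈ Finset.Icc 1 n, A i j x t * u j x t = f i x t) →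
          (∀ i ∈ Finset.Icc 1 n, ∀ x ∈ Set.Icc (0:ℝ) 1, ∀ t ∈ Set.Icc (0:ℝ) T,
            (x = 0 ∨ x = 1 ∨ t = 0) → u i x t = φ i x t) →
          -- `u₀` solves the reduced problem with `u₀ = u` on `Γ_B`
          (∀ i ∈ Finset.Icc 1 n, ∀ x t : ℝ, 0 < x → x < 1 → 0 < t → t ≤ T →
            deriv (fun s => u₀ i x s) t + ∑ j ∈ Finset.Icc 1 n, A i j x t * u₀ j x t
              = f i x t) →
          (∀ i ∈ Finset.Icc 1 n, ∀ x ∈ Set.Icc (0:ℝ) 1, u₀ i x 0 = u i x 0) →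
          -- `v` is the smooth component: `Lv = f` on `Ω`, `v = u₀` on `Γ`
          (∀ i ∈ Finset.Icc 1 n, ∀ x t : ℝ, 0 < x → x < 1 → 0 < t → t ≤ T →
            deriv (fun s => v i x s) t - ε i * iteratedDeriv 2 (fun y => v i y t) x
              + ∑ j ∈ Finset.Icc 1 n, A i j x t * v j x t = f i x t) →
          (∀ i ∈ Finset.Icc 1 n, ∀ x ∈ Set.Icc (0:ℝ) 1, ∀ t ∈ Set.Icc (0:ℝ) T,
            (x = 0 ∨ x = 1 ∨ t = 0) → v i x t = u₀ i x t) →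
          -- `w = w^L` is the left singular component: `Lw = 0` on `Ω`,
          -- `w = u − v` on `Γ_L`, `w = 0` on `Γ_B ∪ Γ_R`
          (∀ i ∈ Finset.Icc 1 n, ∀ x t : ℝ, 0 < x → x < 1 → 0 < t → t ≤ T →
            deriv (fun s => w i x s) t - ε i * iteratedDeriv 2 (fun y => w i y t) x
              + ∑ j ∈ Finset.Icc 1 n, A i j x t * w j x t = 0) →
          (∀ i ∈ Finset.Icc 1 n, ∀ t ∈ Set.Icc (0:ℝ) T,
            w i 0 t = u i 0 t - v i 0 t) →
          (∀ i ∈ Finset.Icc 1 n, ∀ x ∈ Set.Icc (0:ℝ) 1, w i x 0 = 0) →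
          (∀ i ∈ Finset.Icc 1 n, ∀ t ∈ Set.Icc (0:ℝ) T, w i 1 t = 0) →
          ∀ i ∈ Finset.Icc 1 n, ∀ x ∈ Set.Icc (0:ℝ) 1, ∀ t ∈ Set.Icc (0:ℝ) T,
            ∀ l ≤ 2, |iteratedDeriv l (fun s => w i x s) t|
              ≤ C * Real.exp (-x * Real.sqrt (α / ε n)) := by
  classical
  have h01 : (0:ℝ) ≠ 1 := by norm_num
  have hRc : IsCompact (Icc (0:ℝ) 1 ×ˢ Icc (0:ℝ) T) := isCompact_Icc.prod isCompact_Icc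
  have hR00 : ((0:ℝ), (0:ℝ)) ∈ Icc (0:ℝ) 1 ×ˢ Icc (0:ℝ) T :=
    ⟨⟨le_refl 0, zero_le_one⟩, ⟨le_refl 0, hT.le⟩⟩
  set FA : ℕ → ℕ → ℝ × ℝ → ℝ := fun i j p => A i j p.1 p.2 with hFAdef
  set Ff : ℕ → ℝ × ℝ → ℝ := fun i p => f i p.1 p.2 with hFfdef
  set Fφ : ℕ → ℝ × ℝ → ℝ := fun i p => φ i p.1 p.2 with hFφdef
  have hFAc : ∀ i ∈ Finset.Icc 1 n, ∀ j ∈ Finset.Icc 1 n, ContDiff ℝ (⊤ : ℕ∞) (FA i j) :=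
    fun i hi j hj => hAsmooth i hi j hj
  have hFfc : ∀ i ∈ Finset.Icc 1 n, ContDiff ℝ (⊤ : ℕ∞) (Ff i) := fun i hi => hfsmooth i hi
  have hFφc : ∀ i ∈ Finset.Icc 1 n, ContDiff ℝ (⊤ : ℕ∞) (Fφ i) := fun i hi => hφsmooth i hi
  -- bound for A and its t-derivatives
  obtain ⟨KA, hKA⟩ := hRc.exists_bound_of_continuousOn
    (f := fun p => ∑ i ∈ Finset.Icc 1 n, ∑ j ∈ Finset.Icc 1 n,
      (|FA i j p| + |Pt (FA i j) p| + |Pt (Pt (FA i j)) p|))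
    (Continuous.continuousOn (by
      refine continuous_finset_sum _ fun i hi => continuous_finset_sum _ fun j hj => ?_
      exact (((hFAc i hi j hj).continuous.abs.add
        (contDiff_Pt (hFAc i hi j hj)).continuous.abs).add
        (contDiff_Pt (contDiff_Pt (hFAc i hi j hj))).continuous.abs)))
  have hKA' : ∀ p ∈ Icc (0:ℝ) 1 ×ˢ Icc (0:ℝ) T, ∑ i ∈ Finset.Icc 1 n, ∑ j ∈ Finset.Icc 1 n,
      (|FA i j p| + |Pt (FA i j) p| + |Pt (Pt (FA i j)) p|) ≤ KA :=
    fun p hp => le_trans (le_abs_self _) (by simpa [Real.norm_eq_abs] using hKA p hp)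
  have hAterm : ∀ i ∈ Finset.Icc 1 n, ∀ j ∈ Finset.Icc 1 n,
      ∀ p ∈ Icc (0:ℝ) 1 ×ˢ Icc (0:ℝ) T,
      |FA i j p| + |Pt (FA i j) p| + |Pt (Pt (FA i j)) p| ≤ KA := by
    intro i hi j hj p hp
    have h1 : |FA i j p| + |Pt (FA i j) p| + |Pt (Pt (FA i j)) p| ≤
        ∑ j' ∈ Finset.Icc 1 n, (|FA i j' p| + |Pt (FA i j') p| + |Pt (Pt (FA i j')) p|) :=
      Finset.single_le_sum (f := fun j' => |FA i j' p| + |Pt (FA i j') p| + |Pt (Pt (FA i j')) p|)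
        (fun j' _ => by positivity) hj
    have h2 : ∑ j' ∈ Finset.Icc 1 n, (|FA i j' p| + |Pt (FA i j') p| + |Pt (Pt (FA i j')) p|)
        ≤ ∑ i' ∈ Finset.Icc 1 n, ∑ j' ∈ Finset.Icc 1 n,
          (|FA i' j' p| + |Pt (FA i' j') p| + |Pt (Pt (FA i' j')) p|) :=
      Finset.single_le_sum (f := fun i' => ∑ j' ∈ Finset.Icc 1 n,
        (|FA i' j' p| + |Pt (FA i' j') p| + |Pt (Pt (FA i' j')) p|))
        (fun i' _ => Finset.sum_nonneg fun j' _ => by positivity) hi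
    linarith [hKA' p hp]
  have hKA0 : 0 ≤ KA := by
    have h1S : 1 ∈ Finset.Icc 1 n := Finset.mem_Icc.mpr ⟨le_refl 1, hn⟩
    have := hAterm 1 h1S 1 h1S _ hR00
    have h2 : (0:ℝ) ≤ |FA 1 1 ((0:ℝ),(0:ℝ))| + |Pt (FA 1 1) ((0:ℝ),(0:ℝ))| +
      |Pt (Pt (FA 1 1)) ((0:ℝ),(0:ℝ))| := by positivity
    linarith
  -- bound for f and its t-derivative
  obtain ⟨Kf, hKf⟩ := hRc.exists_bound_of_continuousOn
    (f := fun p => ∑ i ∈ Finset.Icc 1 n, (|Ff i p| + |Pt (Ff i) p|))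
    (Continuous.continuousOn (by
      refine continuous_finset_sum _ fun i hi => ?_
      exact (hFfc i hi).continuous.abs.add (contDiff_Pt (hFfc i hi)).continuous.abs))
  have hKf' : ∀ p ∈ Icc (0:ℝ) 1 ×ˢ Icc (0:ℝ) T,
      ∑ i ∈ Finset.Icc 1 n, (|Ff i p| + |Pt (Ff i) p|) ≤ Kf :=
    fun p hp => le_trans (le_abs_self _) (by simpa [Real.norm_eq_abs] using hKf p hp)
  have hfterm : ∀ i ∈ Finset.Icc 1 n, ∀ p ∈ Icc (0:ℝ) 1 ×ˢ Icc (0:ℝ) T,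
      |Ff i p| + |Pt (Ff i) p| ≤ Kf := by
    intro i hi p hp
    have h1 : |Ff i p| + |Pt (Ff i) p| ≤
        ∑ i' ∈ Finset.Icc 1 n, (|Ff i' p| + |Pt (Ff i') p|) :=
      Finset.single_le_sum (f := fun i' => |Ff i' p| + |Pt (Ff i') p|)
        (fun i' _ => by positivity) hi
    linarith [hKf' p hp]
  have hKf0 : 0 ≤ Kf := by
    have h1S : 1 ∈ Finset.Icc 1 n := Finset.mem_Icc.mpr ⟨le_refl 1, hn⟩
    have := hfterm 1 h1S _ hR00
    have h2 : (0:ℝ) ≤ |Ff 1 ((0:ℝ),(0:ℝ))| + |Pt (Ff 1) ((0:ℝ),(0:ℝ))| := by positivity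
    linarith
  -- bound for φ and its t-derivatives
  obtain ⟨Kφ, hKφ⟩ := hRc.exists_bound_of_continuousOn
    (f := fun p => ∑ i ∈ Finset.Icc 1 n,
      (|Fφ i p| + |Pt (Fφ i) p| + |Pt (Pt (Fφ i)) p|))
    (Continuous.continuousOn (by
      refine continuous_finset_sum _ fun i hi => ?_
      exact ((hFφc i hi).continuous.abs.add
        (contDiff_Pt (hFφc i hi)).continuous.abs).add
        (contDiff_Pt (contDiff_Pt (hFφc i hi))).continuous.abs))
  have hKφ' : ∀ p ∈ Icc (0:ℝ) 1 ×ˢ Icc (0:ℝ) T, ∑ i ∈ Finset.Icc 1 n,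
      (|Fφ i p| + |Pt (Fφ i) p| + |Pt (Pt (Fφ i)) p|) ≤ Kφ :=
    fun p hp => le_trans (le_abs_self _) (by simpa [Real.norm_eq_abs] using hKφ p hp)
  have hφterm : ∀ i ∈ Finset.Icc 1 n, ∀ p ∈ Icc (0:ℝ) 1 ×ˢ Icc (0:ℝ) T,
      |Fφ i p| + |Pt (Fφ i) p| + |Pt (Pt (Fφ i)) p| ≤ Kφ := by
    intro i hi p hp
    have h1 : |Fφ i p| + |Pt (Fφ i) p| + |Pt (Pt (Fφ i)) p| ≤
        ∑ i' ∈ Finset.Icc 1 n, (|Fφ i' p| + |Pt (Fφ i') p| + |Pt (Pt (Fφ i')) p|) :=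
      Finset.single_le_sum (f := fun i' => |Fφ i' p| + |Pt (Fφ i') p| + |Pt (Pt (Fφ i')) p|)
        (fun i' _ => by positivity) hi
    linarith [hKφ' p hp]
  have hKφ0 : 0 ≤ Kφ := by
    have h1S : 1 ∈ Finset.Icc 1 n := Finset.mem_Icc.mpr ⟨le_refl 1, hn⟩
    have := hφterm 1 h1S _ hR00
    have h2 : (0:ℝ) ≤ |Fφ 1 ((0:ℝ),(0:ℝ))| + |Pt (Fφ 1) ((0:ℝ),(0:ℝ))| +
      |Pt (Pt (Fφ 1)) ((0:ℝ),(0:ℝ))| := by positivity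
    linarith
  -- the constants
  set E1 : ℝ := (Kf + Kφ + 1) * Real.exp T with hE1def
  have hE1nn : 0 ≤ E1 := mul_nonneg (by linarith) (Real.exp_nonneg _)
  set M2 : ℝ := Kf + n * (KA * E1) with hM2def
  have hM2nn : 0 ≤ M2 := add_nonneg hKf0 (mul_nonneg (Nat.cast_nonneg n) (mul_nonneg hKA0 hE1nn))
  set M3 : ℝ := Kf + n * (KA * E1 + KA * M2) with hM3def
  have hM3nn : 0 ≤ M3 := add_nonneg hKf0 (mul_nonneg (Nat.cast_nonneg n) (add_nonneg (mul_nonneg hKA0 hE1nn) (mul_nonneg hKA0 hM2nn)))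
  set D0 : ℝ := Kφ + E1 with hD0def
  have hD0nn : 0 ≤ D0 := add_nonneg hKφ0 hE1nn
  set C0 : ℝ := (D0 + 0 + 1) * Real.exp T with hC0def
  have hC0pos : 0 < C0 := mul_pos (by linarith) (Real.exp_pos _)
  set S1 : ℝ := n * (KA * C0) with hS1def
  have hS1nn : 0 ≤ S1 := mul_nonneg (Nat.cast_nonneg n) (mul_nonneg hKA0 hC0pos.le)
  set D1 : ℝ := Kφ + M2 with hD1def
  have hD1nn : 0 ≤ D1 := add_nonneg hKφ0 hM2nn
  set C1 : ℝ := (D1 + S1 + 1) * Real.exp T with hC1def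
  have hC1pos : 0 < C1 := mul_pos (by linarith) (Real.exp_pos _)
  set S2 : ℝ := n * (KA * C0 + 2 * (KA * C1)) with hS2def
  have hS2nn : 0 ≤ S2 := mul_nonneg (Nat.cast_nonneg n) (add_nonneg (mul_nonneg hKA0 hC0pos.le) (mul_nonneg (by norm_num) (mul_nonneg hKA0 hC1pos.le)))
  set D2 : ℝ := Kφ + M3 with hD2def
  have hD2nn : 0 ≤ D2 := add_nonneg hKφ0 hM3nn
  set C2 : ℝ := (D2 + S2 + 1) * Real.exp T with hC2def
  have hC2pos : 0 < C2 := mul_pos (by linarith) (Real.exp_pos _)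
  refine ⟨C0 + C1 + C2, by linarith, ?_⟩
  intro ε hε0 hε1 hεmono u u₀ v w hu_c hu0_c hv_c hw_c huE hub hu0Ecur hu0b hvE hvb
    hwEcur hwL hw0 hwR
  -- bound extraction in convenient form
  have hAbd : ∀ i ∈ Finset.Icc 1 n, ∀ j ∈ Finset.Icc 1 n,
      ∀ p ∈ Icc (0:ℝ) 1 ×ˢ Icc (0:ℝ) T,
      |FA i j p| ≤ KA ∧ |Pt (FA i j) p| ≤ KA ∧ |Pt (Pt (FA i j)) p| ≤ KA := by
    intro i hi j hj p hp
    have h := hAterm i hi j hj p hp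
    have n1 : (0:ℝ) ≤ |FA i j p| := abs_nonneg _
    have n2 : (0:ℝ) ≤ |Pt (FA i j) p| := abs_nonneg _
    have n3 : (0:ℝ) ≤ |Pt (Pt (FA i j)) p| := abs_nonneg _
    exact ⟨by linarith, by linarith, by linarith⟩
  have hfbd : ∀ i ∈ Finset.Icc 1 n, ∀ p ∈ Icc (0:ℝ) 1 ×ˢ Icc (0:ℝ) T,
      |Ff i p| ≤ Kf ∧ |Pt (Ff i) p| ≤ Kf := by
    intro i hi p hp
    have h := hfterm i hi p hp
    have n1 : (0:ℝ) ≤ |Ff i p| := abs_nonneg _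
    have n2 : (0:ℝ) ≤ |Pt (Ff i) p| := abs_nonneg _
    exact ⟨by linarith, by linarith⟩
  have hφbd : ∀ i ∈ Finset.Icc 1 n, ∀ p ∈ Icc (0:ℝ) 1 ×ˢ Icc (0:ℝ) T,
      |Fφ i p| ≤ Kφ ∧ |Pt (Fφ i) p| ≤ Kφ ∧ |Pt (Pt (Fφ i)) p| ≤ Kφ := by
    intro i hi p hp
    have h := hφterm i hi p hp
    have n1 : (0:ℝ) ≤ |Fφ i p| := abs_nonneg _
    have n2 : (0:ℝ) ≤ |Pt (Fφ i) p| := abs_nonneg _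
    have n3 : (0:ℝ) ≤ |Pt (Pt (Fφ i)) p| := abs_nonneg _
    exact ⟨by linarith, by linarith, by linarith⟩
  -- ε and β
  have hnS : n ∈ Finset.Icc 1 n := Finset.mem_Icc.mpr ⟨hn, le_refl n⟩
  have hεn : 0 < ε n := hε0 n hnS
  set β : ℝ := Real.sqrt (α / ε n) with hβdef
  have hβ0 : 0 ≤ β := Real.sqrt_nonneg _
  have hβsq : β ^ 2 = α / ε n := Real.sq_sqrt (div_nonneg hα.le hεn.le)
  have hkey : ∀ i ∈ Finset.Icc 1 n, ε i * β ^ 2 ≤ α := by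
    intro i hi
    obtain ⟨hi1, hin⟩ := Finset.mem_Icc.mp hi
    have hle : ε i ≤ ε n := by
      rcases eq_or_lt_of_le hin with h | h
      · rw [h]
      · exact (hεmono i n hi1 h (le_refl n)).le
    rw [hβsq]
    calc ε i * (α / ε n) ≤ ε n * (α / ε n) :=
          mul_le_mul_of_nonneg_right hle (div_nonneg hα.le hεn.le)
      _ = α := by field_simp
  -- uncurried solution functions
  set W : ℕ → ℝ × ℝ → ℝ := fun i p => w i p.1 p.2 with hWdef
  set U0 : ℕ → ℝ × ℝ → ℝ := fun i p => u₀ i p.1 p.2 with hU0def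
  have hWc : ∀ i ∈ Finset.Icc 1 n, ContDiff ℝ (⊤ : ℕ∞) (W i) := fun i hi => hw_c i hi
  have hU0c : ∀ i ∈ Finset.Icc 1 n, ContDiff ℝ (⊤ : ℕ∞) (U0 i) := fun i hi => hu0_c i hi
  -- uncurried coefficient facts
  have hFAoff : ∀ i ∈ Finset.Icc 1 n, ∀ j ∈ Finset.Icc 1 n, i ≠ j →
      ∀ p ∈ Icc (0:ℝ) 1 ×ˢ Icc (0:ℝ) T, FA i j p ≤ 0 :=
    fun i hi j hj hne p hp => hAoff i hi j hj hne p.1 hp.1 p.2 hp.2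
  have hFAsum : ∀ p ∈ Icc (0:ℝ) 1 ×ˢ Icc (0:ℝ) T, ∀ i ∈ Finset.Icc 1 n,
      α < ∑ j ∈ Finset.Icc 1 n, FA i j p :=
    fun p hp i hi => hαA p.1 hp.1 p.2 hp.2 i hi
  -- uncurried PDEs
  have hwE : ∀ i ∈ Finset.Icc 1 n, ∀ p : ℝ × ℝ, p.1 ∈ Ioo (0:ℝ) 1 → p.2 ∈ Ioc (0:ℝ) T →
      Pt (W i) p - ε i * Px (Px (W i)) p + ∑ j ∈ Finset.Icc 1 n, FA i j p * W j p = 0 := by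
    intro i hi p hx ht
    have h0 := hwEcur i hi p.1 p.2 hx.1 hx.2 ht.1 ht.2
    have e1 : deriv (fun s => w i p.1 s) p.2 = Pt (W i) p := deriv_Pt (hWc i hi) p.1 p.2
    have e2 : iteratedDeriv 2 (fun y => w i y p.2) p.1 = Px (Px (W i)) p :=
      iteratedDeriv_two_eq (hWc i hi) p.1 p.2
    rw [e1, e2] at h0
    exact h0
  have hu0E : ∀ i ∈ Finset.Icc 1 n, ∀ p : ℝ × ℝ, p.1 ∈ Ioo (0:ℝ) 1 → p.2 ∈ Ioc (0:ℝ) T →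
      Pt (U0 i) p + ∑ j ∈ Finset.Icc 1 n, FA i j p * U0 j p = Ff i p := by
    intro i hi p hx ht
    have h0 := hu0Ecur i hi p.1 p.2 hx.1 hx.2 ht.1 ht.2
    have e1 : deriv (fun s => u₀ i p.1 s) p.2 = Pt (U0 i) p := deriv_Pt (hU0c i hi) p.1 p.2
    rw [e1] at h0
    exact h0
  -- boundary data, uncurried
  have hW0' : ∀ i ∈ Finset.Icc 1 n, ∀ x ∈ Icc (0:ℝ) 1, W i (x, 0) = 0 :=
    fun i hi x hx => hw0 i hi x hx
  have hW1' : ∀ i ∈ Finset.Icc 1 n, ∀ t ∈ Icc (0:ℝ) T, W i (1, t) = 0 :=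
    fun i hi t ht => hwR i hi t ht
  have hWL' : ∀ i ∈ Finset.Icc 1 n, ∀ t ∈ Icc (0:ℝ) T,
      W i (0, t) = Fφ i (0, t) - U0 i (0, t) := by
    intro i hi t ht
    have h1 := hwL i hi t ht
    have h2 := hub i hi 0 ⟨le_refl 0, zero_le_one⟩ t ht (Or.inl rfl)
    have h3 := hvb i hi 0 ⟨le_refl 0, zero_le_one⟩ t ht (Or.inl rfl)
    show w i 0 t = φ i 0 t - u₀ i 0 t
    rw [h1, h2, h3]
  have hU0init : ∀ i ∈ Finset.Icc 1 n, ∀ x ∈ Icc (0:ℝ) 1, U0 i (x, 0) = Fφ i (x, 0) := by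
    intro i hi x hx
    show u₀ i x 0 = φ i x 0
    rw [hu0b i hi x hx, hub i hi x hx 0 ⟨le_refl 0, hT.le⟩ (Or.inr (Or.inr rfl))]
  -- Step 1: uniform bound on u₀
  have hU0bd : ∀ i ∈ Finset.Icc 1 n, ∀ p ∈ Icc (0:ℝ) 1 ×ˢ Icc (0:ℝ) T, |U0 i p| ≤ E1 := by
    have hint : ∀ x ∈ Ioo (0:ℝ) 1, ∀ i ∈ Finset.Icc 1 n, ∀ t ∈ Icc (0:ℝ) T,
        |U0 i (x, t)| ≤ E1 := by
      intro x hx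
      have hxI : x ∈ Icc (0:ℝ) 1 := ⟨hx.1.le, hx.2.le⟩
      have hkey2 : ∀ σ : ℝ, σ = 1 ∨ σ = -1 → ∀ i ∈ Finset.Icc 1 n, ∀ t ∈ Icc (0:ℝ) T,
          0 ≤ (Kf + Kφ + 1) * Real.exp t + σ * U0 i (x, t) := by
        intro σ hσ
        refine odeMaxPrinciple n hn T hT (fun i j t => FA i j (x, t))
          (fun i hi j hj hne t ht => hFAoff i hi j hj hne (x, t) ⟨hxI, ht⟩)
          (fun t ht i hi => lt_trans hα (hFAsum (x, t) ⟨hxI, ht⟩ i hi))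
          (fun i t => (Kf + Kφ + 1) * Real.exp t + σ * U0 i (x, t)) ?_ ?_ ?_
        · intro i hi
          refine (contDiff_const.mul Real.contDiff_exp).add (contDiff_const.mul ?_)
          exact (hU0c i hi).comp (contDiff_const.prodMk contDiff_id)
        · intro i hi t ht0 htT
          have htI : t ∈ Icc (0:ℝ) T := ⟨ht0.le, htT⟩
          have hd1 : HasDerivAt (fun s => (Kf + Kφ + 1) * Real.exp s)
              ((Kf + Kφ + 1) * Real.exp t) t := (Real.hasDerivAt_exp t).const_mul _
          have hd2 : HasDerivAt (fun s => U0 i (x, s)) (Pt (U0 i) (x, t)) t :=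
            hasDerivAt_Pt (hU0c i hi) x t
          have hdg : HasDerivAt (fun s => (Kf + Kφ + 1) * Real.exp s + σ * U0 i (x, s))
              ((Kf + Kφ + 1) * Real.exp t + σ * Pt (U0 i) (x, t)) t :=
            hd1.add (hd2.const_mul σ)
          rw [hdg.deriv]
          have hPt := hu0E i hi (x, t) hx ⟨ht0, htT⟩
          have hsum : ∑ j ∈ Finset.Icc 1 n,
              FA i j (x, t) * ((Kf + Kφ + 1) * Real.exp t + σ * U0 j (x, t)) =
              (∑ j ∈ Finset.Icc 1 n, FA i j (x, t)) * ((Kf + Kφ + 1) * Real.exp t) +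
                σ * ∑ j ∈ Finset.Icc 1 n, FA i j (x, t) * U0 j (x, t) := by
            calc ∑ j ∈ Finset.Icc 1 n,
                FA i j (x, t) * ((Kf + Kφ + 1) * Real.exp t + σ * U0 j (x, t))
                = ∑ j ∈ Finset.Icc 1 n, (FA i j (x, t) * ((Kf + Kφ + 1) * Real.exp t) +
                    σ * (FA i j (x, t) * U0 j (x, t))) :=
                  Finset.sum_congr rfl fun j _ => by ring
              _ = _ := by rw [Finset.sum_add_distrib, ← Finset.sum_mul, ← Finset.mul_sum]
          rw [hsum]
          have hfb := (hfbd i hi (x, t) ⟨hxI, htI⟩).1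
          have habs := abs_le.mp hfb
          have hSA : 0 < ∑ j ∈ Finset.Icc 1 n, FA i j (x, t) :=
            lt_trans hα (hFAsum (x, t) ⟨hxI, htI⟩ i hi)
          have hexp1 : 1 ≤ Real.exp t := Real.one_le_exp ht0.le
          have hc0 : (0:ℝ) < Kf + Kφ + 1 := by linarith
          have hp1 : (Kf + Kφ + 1) * 1 ≤ (Kf + Kφ + 1) * Real.exp t :=
            mul_le_mul_of_nonneg_left hexp1 hc0.le
          have hp2 : 0 ≤ (∑ j ∈ Finset.Icc 1 n, FA i j (x, t)) *
              ((Kf + Kφ + 1) * Real.exp t) :=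
            mul_nonneg hSA.le (by positivity)
          rcases hσ with h1 | h1 <;> subst h1
          · have : Pt (U0 i) (x, t) =
                Ff i (x, t) - ∑ j ∈ Finset.Icc 1 n, FA i j (x, t) * U0 j (x, t) := by
              linarith
            rw [this]
            simp only [one_mul]
            linarith [habs.1]
          · have : Pt (U0 i) (x, t) =
                Ff i (x, t) - ∑ j ∈ Finset.Icc 1 n, FA i j (x, t) * U0 j (x, t) := by
              linarith
            rw [this]
            simp only [neg_one_mul]
            linarith [habs.2]
        · intro i hi
          have h0 := hU0init i hi x hxI
          have hφb := (hφbd i hi (x, 0) ⟨hxI, ⟨le_refl 0, hT.le⟩⟩).1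
          have habs := abs_le.mp hφb
          simp only [Real.exp_zero, mul_one]
          rcases hσ with h1 | h1 <;> subst h1
          · rw [h0]; simp only [one_mul]; linarith [habs.1]
          · rw [h0]; simp only [neg_one_mul]; linarith [habs.2]
      intro i hi t ht
      have h1 := hkey2 1 (Or.inl rfl) i hi t ht
      have h2 := hkey2 (-1) (Or.inr rfl) i hi t ht
      have hle : (Kf + Kφ + 1) * Real.exp t ≤ E1 := by
        rw [hE1def]
        exact mul_le_mul_of_nonneg_left (Real.exp_le_exp.2 ht.2) (by linarith)
      rw [abs_le]
      constructor
      · simp only [one_mul] at h1; linarith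
      · simp only [neg_one_mul] at h2; linarith
    intro i hi p hp
    have hcont : Continuous fun q => E1 - |U0 i q| :=
      continuous_const.sub (hU0c i hi).continuous.abs
    have h2 := ext_nonneg (s := Ioo (0:ℝ) 1 ×ˢ Icc (0:ℝ) T) hcont
      (fun q hq => by
        have := hint q.1 hq.1 i hi q.2 hq.2
        simp only [Prod.mk.eta] at this
        linarith) (p := p)
      (by
        rw [closure_prod_eq, closure_Ioo h01, IsClosed.closure_eq isClosed_Icc]
        exact hp)
    linarith
  have hcard : (Finset.Icc 1 n).card = n := by rw [Nat.card_Icc]; omega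
  have hsumbd : ∀ (G : ℕ → ℝ) (B : ℝ), 0 ≤ B → (∀ j ∈ Finset.Icc 1 n, |G j| ≤ B) →
      |∑ j ∈ Finset.Icc 1 n, G j| ≤ n * B := by
    intro G B hB hG
    calc |∑ j ∈ Finset.Icc 1 n, G j| ≤ ∑ j ∈ Finset.Icc 1 n, |G j| :=
          Finset.abs_sum_le_sum_abs _ _
      _ ≤ ∑ _j ∈ Finset.Icc 1 n, B := Finset.sum_le_sum hG
      _ = n * B := by rw [Finset.sum_const, hcard, nsmul_eq_mul]
  -- identity for Pt U0 on the closed rectangle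
  have hE0R : ∀ i ∈ Finset.Icc 1 n, ∀ p ∈ Icc (0:ℝ) 1 ×ˢ Icc (0:ℝ) T,
      Pt (U0 i) p + ∑ j ∈ Finset.Icc 1 n, FA i j p * U0 j p - Ff i p = 0 := by
    intro i hi
    have hcont : Continuous fun q =>
        Pt (U0 i) q + ∑ j ∈ Finset.Icc 1 n, FA i j q * U0 j q - Ff i q := by
      refine ((contDiff_Pt (hU0c i hi)).continuous.add ?_).sub (hFfc i hi).continuous
      exact continuous_finset_sum _ fun j hj =>
        (hFAc i hi j hj).continuous.mul (hU0c j hj).continuous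
    intro p hp
    refine ext_eq_zero (s := Ioo (0:ℝ) 1 ×ˢ Ioc (0:ℝ) T) hcont ?_ ?_
    · intro q hq
      have h := hu0E i hi q hq.1 hq.2
      show Pt (U0 i) q + ∑ j ∈ Finset.Icc 1 n, FA i j q * U0 j q - Ff i q = 0
      linarith
    · rw [closure_prod_eq, closure_Ioo h01, closure_Ioc hT.ne]
      exact hp
  -- bound for Pt U0
  have hPtU0bd : ∀ i ∈ Finset.Icc 1 n, ∀ p ∈ Icc (0:ℝ) 1 ×ˢ Icc (0:ℝ) T,
      |Pt (U0 i) p| ≤ M2 := by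
    intro i hi p hp
    have h := hE0R i hi p hp
    have hsum : |∑ j ∈ Finset.Icc 1 n, FA i j p * U0 j p| ≤ n * (KA * E1) := by
      refine hsumbd _ _ (mul_nonneg hKA0 hE1nn) ?_
      intro j hj
      rw [abs_mul]
      exact mul_le_mul (hAbd i hi j hj p hp).1 (hU0bd j hj p hp) (abs_nonneg _) hKA0
    have hfb := (hfbd i hi p hp).1
    have h1 : Pt (U0 i) p = Ff i p - ∑ j ∈ Finset.Icc 1 n, FA i j p * U0 j p := by linarith
    rw [h1, hM2def]
    calc |Ff i p - ∑ j ∈ Finset.Icc 1 n, FA i j p * U0 j p| ≤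
          |Ff i p| + |∑ j ∈ Finset.Icc 1 n, FA i j p * U0 j p| := abs_sub _ _
      _ ≤ Kf + n * (KA * E1) := by linarith
  -- differentiated identity for u₀
  have hE1R : ∀ i ∈ Finset.Icc 1 n, ∀ p ∈ Icc (0:ℝ) 1 ×ˢ Icc (0:ℝ) T,
      Pt (Pt (U0 i)) p + ∑ j ∈ Finset.Icc 1 n,
        (Pt (FA i j) p * U0 j p + FA i j p * Pt (U0 j) p) - Pt (Ff i) p = 0 := by
    intro i hi
    have hs₂ : ∀ p ∈ Ioo (0:ℝ) 1 ×ˢ Ioo (0:ℝ) T,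
        Pt (Pt (U0 i)) p + ∑ j ∈ Finset.Icc 1 n,
          (Pt (FA i j) p * U0 j p + FA i j p * Pt (U0 j) p) - Pt (Ff i) p = 0 := by
      intro p hp
      have hH0 : (fun q => Pt (U0 i) q + ∑ j ∈ Finset.Icc 1 n, FA i j q * U0 j q - Ff i q)
          =ᶠ[nhds p] fun _ => 0 := by
        refine Filter.eventually_of_mem ((isOpen_Ioo.prod isOpen_Ioo).mem_nhds hp) ?_
        intro q hq
        have h := hu0E i hi q hq.1 ⟨hq.2.1, hq.2.2.le⟩
        show Pt (U0 i) q + ∑ j ∈ Finset.Icc 1 n, FA i j q * U0 j q - Ff i q = 0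
        linarith
      have hPtH := Pt_eventually_zero hH0
      have dPtU0 : DifferentiableAt ℝ (Pt (U0 i)) p :=
        (contDiff_Pt (hU0c i hi)).differentiable (by simp) p
      have dsum : DifferentiableAt ℝ
          (fun q => ∑ j ∈ Finset.Icc 1 n, FA i j q * U0 j q) p :=
        DifferentiableAt.fun_sum fun j hj =>
          ((hFAc i hi j hj).differentiable (by simp) p).mul ((hU0c j hj).differentiable (by simp) p)
      have dFf : DifferentiableAt ℝ (Ff i) p := (hFfc i hi).differentiable (by simp) p
      rw [Pt_sub (dPtU0.fun_add dsum) dFf, Pt_add dPtU0 dsum,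
        Pt_sum (fun j hj => ((hFAc i hi j hj).differentiable (by simp) p).fun_mul
          ((hU0c j hj).differentiable (by simp) p)),
        Finset.sum_congr rfl (fun j hj => Pt_mul ((hFAc i hi j hj).differentiable (by simp) p)
          ((hU0c j hj).differentiable (by simp) p))] at hPtH
      exact hPtH
    have hcont : Continuous fun q => Pt (Pt (U0 i)) q + ∑ j ∈ Finset.Icc 1 n,
        (Pt (FA i j) q * U0 j q + FA i j q * Pt (U0 j) q) - Pt (Ff i) q := by
      refine ((contDiff_Pt (contDiff_Pt (hU0c i hi))).continuous.add ?_).sub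
        (contDiff_Pt (hFfc i hi)).continuous
      refine continuous_finset_sum _ fun j hj => ?_
      exact ((contDiff_Pt (hFAc i hi j hj)).continuous.mul (hU0c j hj).continuous).add
        ((hFAc i hi j hj).continuous.mul (contDiff_Pt (hU0c j hj)).continuous)
    intro p hp
    refine ext_eq_zero (s := Ioo (0:ℝ) 1 ×ˢ Ioo (0:ℝ) T) hcont hs₂ ?_
    · rw [closure_prod_eq, closure_Ioo h01, closure_Ioo hT.ne]
      exact hp
  -- bound for Pt Pt U0
  have hPtPtU0bd : ∀ i ∈ Finset.Icc 1 n, ∀ p ∈ Icc (0:ℝ) 1 ×ˢ Icc (0:ℝ) T,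
      |Pt (Pt (U0 i)) p| ≤ M3 := by
    intro i hi p hp
    have h := hE1R i hi p hp
    have hsum : |∑ j ∈ Finset.Icc 1 n, (Pt (FA i j) p * U0 j p + FA i j p * Pt (U0 j) p)|
        ≤ n * (KA * E1 + KA * M2) := by
      refine hsumbd _ _ (by
        have := mul_nonneg hKA0 hE1nn
        have := mul_nonneg hKA0 hM2nn
        linarith) ?_
      intro j hj
      have h1 : |Pt (FA i j) p * U0 j p| ≤ KA * E1 := by
        rw [abs_mul]
        exact mul_le_mul (hAbd i hi j hj p hp).2.1 (hU0bd j hj p hp) (abs_nonneg _) hKA0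
      have h2 : |FA i j p * Pt (U0 j) p| ≤ KA * M2 := by
        rw [abs_mul]
        exact mul_le_mul (hAbd i hi j hj p hp).1 (hPtU0bd j hj p hp) (abs_nonneg _) hKA0
      calc |Pt (FA i j) p * U0 j p + FA i j p * Pt (U0 j) p| ≤
            |Pt (FA i j) p * U0 j p| + |FA i j p * Pt (U0 j) p| := abs_add_le _ _
        _ ≤ KA * E1 + KA * M2 := by linarith
    have hfb := (hfbd i hi p hp).2
    have h1 : Pt (Pt (U0 i)) p = Pt (Ff i) p -
        ∑ j ∈ Finset.Icc 1 n, (Pt (FA i j) p * U0 j p + FA i j p * Pt (U0 j) p) := by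
      linarith
    rw [h1, hM3def]
    calc |Pt (Ff i) p - ∑ j ∈ Finset.Icc 1 n,
          (Pt (FA i j) p * U0 j p + FA i j p * Pt (U0 j) p)| ≤
          |Pt (Ff i) p| + |∑ j ∈ Finset.Icc 1 n,
            (Pt (FA i j) p * U0 j p + FA i j p * Pt (U0 j) p)| := abs_sub _ _
      _ ≤ Kf + n * (KA * E1 + KA * M2) := by linarith
  -- Step: bound for w itself
  have hWbd : ∀ i ∈ Finset.Icc 1 n, ∀ p ∈ Icc (0:ℝ) 1 ×ˢ Icc (0:ℝ) T,
      |W i p| ≤ (D0 + 0 + 1) * Real.exp T * Real.exp (-β * p.1) := by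
    refine layerBound n hn T α β hT hα hβ0 FA ε hε0 hkey hFAoff hFAsum W hWc D0 0
      hD0nn (le_refl 0) ?_ hW0' hW1' ?_
    · intro i hi p hx ht
      rw [hwE i hi p hx ⟨ht.1, ht.2.le⟩]
      simp
    · intro i hi t ht
      rw [hWL' i hi t ht]
      have h0T : ((0:ℝ), t) ∈ Icc (0:ℝ) 1 ×ˢ Icc (0:ℝ) T := ⟨⟨le_refl 0, zero_le_one⟩, ht⟩
      have h1 := (hφbd i hi (0, t) h0T).1
      have h2 := hU0bd i hi (0, t) h0T
      rw [hD0def]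
      calc |Fφ i (0,t) - U0 i (0,t)| ≤ |Fφ i (0,t)| + |U0 i (0,t)| := abs_sub _ _
        _ ≤ Kφ + E1 := by linarith
  have hWbdC0 : ∀ i ∈ Finset.Icc 1 n, ∀ p ∈ Icc (0:ℝ) 1 ×ˢ Icc (0:ℝ) T,
      |W i p| ≤ C0 * Real.exp (-β * p.1) := by
    intro i hi p hp
    calc |W i p| ≤ (D0 + 0 + 1) * Real.exp T * Real.exp (-β * p.1) := hWbd i hi p hp
      _ = C0 * Real.exp (-β * p.1) := by rw [hC0def]
  -- z = ∂ₜw : PDE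
  have hZE : ∀ i ∈ Finset.Icc 1 n, ∀ p ∈ Ioo (0:ℝ) 1 ×ˢ Ioo (0:ℝ) T,
      Pt (Pt (W i)) p - ε i * Px (Px (Pt (W i))) p +
        ∑ j ∈ Finset.Icc 1 n, FA i j p * Pt (W j) p =
        -∑ j ∈ Finset.Icc 1 n, Pt (FA i j) p * W j p := by
    intro i hi p hp
    have hH0 : (fun q => Pt (W i) q - ε i * Px (Px (W i)) q +
        ∑ j ∈ Finset.Icc 1 n, FA i j q * W j q) =ᶠ[nhds p] fun _ => 0 := by
      refine Filter.eventually_of_mem ((isOpen_Ioo.prod isOpen_Ioo).mem_nhds hp) ?_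
      intro q hq
      exact hwE i hi q hq.1 ⟨hq.2.1, hq.2.2.le⟩
    have hPtH := Pt_eventually_zero hH0
    have dPtW : DifferentiableAt ℝ (Pt (W i)) p :=
      (contDiff_Pt (hWc i hi)).differentiable (by simp) p
    have dPxxW : DifferentiableAt ℝ (Px (Px (W i))) p :=
      (contDiff_Px (contDiff_Px (hWc i hi))).differentiable (by simp) p
    rw [Pt_add (dPtW.fun_sub (dPxxW.const_mul (ε i)))
        (DifferentiableAt.fun_sum fun j hj => ((hFAc i hi j hj).differentiable (by simp) p).fun_mul
          ((hWc j hj).differentiable (by simp) p)),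
      Pt_sub dPtW (dPxxW.const_mul (ε i)),
      Pt_const_mul dPxxW (ε i),
      Pt_sum (fun j hj => ((hFAc i hi j hj).differentiable (by simp) p).fun_mul
        ((hWc j hj).differentiable (by simp) p)),
      Finset.sum_congr rfl (fun j hj => Pt_mul ((hFAc i hi j hj).differentiable (by simp) p)
        ((hWc j hj).differentiable (by simp) p))] at hPtH
    have hcl : Pt (Px (Px (W i))) p = Px (Px (Pt (W i))) p := by
      have c1 : Px (Pt (Px (W i))) p = Pt (Px (Px (W i))) p :=
        Pt_Px_comm (contDiff_Px (hWc i hi)) p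
      have c2 : Pt (Px (W i)) = Px (Pt (W i)) := funext fun q => (Pt_Px_comm (hWc i hi) q).symm
      rw [← c1, c2]
    rw [hcl, Finset.sum_add_distrib] at hPtH
    linarith
  -- E-identity on closed rectangle
  have hER : ∀ i ∈ Finset.Icc 1 n, ∀ p ∈ Icc (0:ℝ) 1 ×ˢ Icc (0:ℝ) T,
      Pt (W i) p - ε i * Px (Px (W i)) p +
        ∑ j ∈ Finset.Icc 1 n, FA i j p * W j p = 0 := by
    intro i hi
    have hcont : Continuous fun q => Pt (W i) q - ε i * Px (Px (W i)) q +
        ∑ j ∈ Finset.Icc 1 n, FA i j q * W j q := by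
      refine ((contDiff_Pt (hWc i hi)).continuous.sub
        (continuous_const.mul (contDiff_Px (contDiff_Px (hWc i hi))).continuous)).add ?_
      exact continuous_finset_sum _ fun j hj =>
        (hFAc i hi j hj).continuous.mul (hWc j hj).continuous
    intro p hp
    refine ext_eq_zero (s := Ioo (0:ℝ) 1 ×ˢ Ioc (0:ℝ) T) hcont
      (fun q hq => hwE i hi q hq.1 hq.2) ?_
    rw [closure_prod_eq, closure_Ioo h01, closure_Ioc hT.ne]
    exact hp
  -- boundary values for z
  have hZ0 : ∀ i ∈ Finset.Icc 1 n, ∀ x ∈ Icc (0:ℝ) 1, Pt (W i) (x, 0) = 0 := by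
    intro i hi
    refine horiz_ext_zero (contDiff_Pt (hWc i hi)).continuous ?_
    intro x hx
    have hxI : x ∈ Icc (0:ℝ) 1 := ⟨hx.1.le, hx.2.le⟩
    have h := hER i hi (x, 0) ⟨hxI, ⟨le_refl 0, hT.le⟩⟩
    have hPxx := PxPx_zero_seg (hWc i hi) (hW0' i hi) x hxI
    have hsum0 : ∑ j ∈ Finset.Icc 1 n, FA i j (x, 0) * W j (x, 0) = 0 :=
      Finset.sum_eq_zero fun j hj => by rw [hW0' j hj x hxI, mul_zero]
    rw [hPxx, hsum0] at h
    linarith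
  have hZ1 : ∀ i ∈ Finset.Icc 1 n, ∀ t ∈ Icc (0:ℝ) T, Pt (W i) (1, t) = 0 := by
    intro i hi t ht
    have h := vert_step hT (hWc i hi) (contDiff_const) (G := fun _ => (0:ℝ))
      (fun s hs => by rw [hW1' i hi s hs]) t ht
    rw [h, Pt_const]
  have hZLeq : ∀ i ∈ Finset.Icc 1 n, ∀ t ∈ Icc (0:ℝ) T,
      Pt (W i) (0, t) = Pt (Fφ i) (0, t) - Pt (U0 i) (0, t) := by
    intro i hi t ht
    have h := vert_step hT (hWc i hi) ((hFφc i hi).sub (hU0c i hi))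
      (G := fun q => Fφ i q - U0 i q) (fun s hs => hWL' i hi s hs) t ht
    rw [h]
    exact Pt_sub ((hFφc i hi).differentiable (by simp) _) ((hU0c i hi).differentiable (by simp) _)
  -- bound for z
  have hZbd : ∀ i ∈ Finset.Icc 1 n, ∀ p ∈ Icc (0:ℝ) 1 ×ˢ Icc (0:ℝ) T,
      |Pt (W i) p| ≤ (D1 + S1 + 1) * Real.exp T * Real.exp (-β * p.1) := by
    refine layerBound n hn T α β hT hα hβ0 FA ε hε0 hkey hFAoff hFAsum
      (fun i => Pt (W i)) (fun i hi => contDiff_Pt (hWc i hi)) D1 S1 hD1nn hS1nn ?_ hZ0 hZ1 ?_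
    · intro i hi p hx ht
      have hpR : p ∈ Icc (0:ℝ) 1 ×ˢ Icc (0:ℝ) T := ⟨⟨hx.1.le, hx.2.le⟩, ⟨ht.1.le, ht.2.le⟩⟩
      show |Pt (Pt (W i)) p - ε i * Px (Px (Pt (W i))) p +
        ∑ j ∈ Finset.Icc 1 n, FA i j p * Pt (W j) p| ≤ S1 * Real.exp (-β * p.1)
      rw [hZE i hi p ⟨hx, ht⟩, abs_neg]
      have hs : |∑ j ∈ Finset.Icc 1 n, Pt (FA i j) p * W j p| ≤
          n * (KA * (C0 * Real.exp (-β * p.1))) := by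
        refine hsumbd _ _ (mul_nonneg hKA0 (mul_nonneg hC0pos.le (Real.exp_nonneg _))) ?_
        intro j hj
        rw [abs_mul]
        exact mul_le_mul (hAbd i hi j hj p hpR).2.1 (hWbdC0 j hj p hpR) (abs_nonneg _) hKA0
      calc |∑ j ∈ Finset.Icc 1 n, Pt (FA i j) p * W j p| ≤
            n * (KA * (C0 * Real.exp (-β * p.1))) := hs
        _ = S1 * Real.exp (-β * p.1) := by rw [hS1def]; ring
    · intro i hi t ht
      have h0T : ((0:ℝ), t) ∈ Icc (0:ℝ) 1 ×ˢ Icc (0:ℝ) T := ⟨⟨le_refl 0, zero_le_one⟩, ht⟩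
      show |Pt (W i) (0, t)| ≤ D1
      rw [hZLeq i hi t ht, hD1def]
      have h1 := (hφbd i hi (0, t) h0T).2.1
      have h2 := hPtU0bd i hi (0, t) h0T
      calc |Pt (Fφ i) (0,t) - Pt (U0 i) (0,t)| ≤
            |Pt (Fφ i) (0,t)| + |Pt (U0 i) (0,t)| := abs_sub _ _
        _ ≤ Kφ + M2 := by linarith
  have hZbdC1 : ∀ i ∈ Finset.Icc 1 n, ∀ p ∈ Icc (0:ℝ) 1 ×ˢ Icc (0:ℝ) T,
      |Pt (W i) p| ≤ C1 * Real.exp (-β * p.1) := by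
    intro i hi p hp
    calc |Pt (W i) p| ≤ (D1 + S1 + 1) * Real.exp T * Real.exp (-β * p.1) := hZbd i hi p hp
      _ = C1 * Real.exp (-β * p.1) := by rw [hC1def]
  -- identity for z on closed rectangle
  have hE1Rw : ∀ i ∈ Finset.Icc 1 n, ∀ p ∈ Icc (0:ℝ) 1 ×ˢ Icc (0:ℝ) T,
      Pt (Pt (W i)) p - ε i * Px (Px (Pt (W i))) p + ∑ j ∈ Finset.Icc 1 n,
        (FA i j p * Pt (W j) p + Pt (FA i j) p * W j p) = 0 := by
    intro i hi
    have hcont : Continuous fun q => Pt (Pt (W i)) q - ε i * Px (Px (Pt (W i))) q +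
        ∑ j ∈ Finset.Icc 1 n, (FA i j q * Pt (W j) q + Pt (FA i j) q * W j q) := by
      refine ((contDiff_Pt (contDiff_Pt (hWc i hi))).continuous.sub
        (continuous_const.mul
          (contDiff_Px (contDiff_Px (contDiff_Pt (hWc i hi)))).continuous)).add ?_
      refine continuous_finset_sum _ fun j hj => ?_
      exact ((hFAc i hi j hj).continuous.mul (contDiff_Pt (hWc j hj)).continuous).add
        ((contDiff_Pt (hFAc i hi j hj)).continuous.mul (hWc j hj).continuous)
    intro p hp
    refine ext_eq_zero (s := Ioo (0:ℝ) 1 ×ˢ Ioo (0:ℝ) T) hcont ?_ ?_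
    · intro q hq
      have h := hZE i hi q hq
      show Pt (Pt (W i)) q - ε i * Px (Px (Pt (W i))) q + ∑ j ∈ Finset.Icc 1 n,
        (FA i j q * Pt (W j) q + Pt (FA i j) q * W j q) = 0
      rw [Finset.sum_add_distrib]
      linarith
    · rw [closure_prod_eq, closure_Ioo h01, closure_Ioo hT.ne]
      exact hp
  -- PDE for z₂
  have hZ2E : ∀ i ∈ Finset.Icc 1 n, ∀ p ∈ Ioo (0:ℝ) 1 ×ˢ Ioo (0:ℝ) T,
      Pt (Pt (Pt (W i))) p - ε i * Px (Px (Pt (Pt (W i)))) p +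
        ∑ j ∈ Finset.Icc 1 n, FA i j p * Pt (Pt (W j)) p =
        -∑ j ∈ Finset.Icc 1 n,
          (2 * (Pt (FA i j) p * Pt (W j) p) + Pt (Pt (FA i j)) p * W j p) := by
    intro i hi p hp
    have hH0 : (fun q => Pt (Pt (W i)) q - ε i * Px (Px (Pt (W i))) q +
        ∑ j ∈ Finset.Icc 1 n, (FA i j q * Pt (W j) q + Pt (FA i j) q * W j q))
        =ᶠ[nhds p] fun _ => 0 := by
      refine Filter.eventually_of_mem ((isOpen_Ioo.prod isOpen_Ioo).mem_nhds hp) ?_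
      intro q hq
      have h := hZE i hi q hq
      show Pt (Pt (W i)) q - ε i * Px (Px (Pt (W i))) q + ∑ j ∈ Finset.Icc 1 n,
        (FA i j q * Pt (W j) q + Pt (FA i j) q * W j q) = 0
      rw [Finset.sum_add_distrib]
      linarith
    have hPtH := Pt_eventually_zero hH0
    have dPtPtW : DifferentiableAt ℝ (Pt (Pt (W i))) p :=
      (contDiff_Pt (contDiff_Pt (hWc i hi))).differentiable (by simp) p
    have dPxxPtW : DifferentiableAt ℝ (Px (Px (Pt (W i)))) p :=
      (contDiff_Px (contDiff_Px (contDiff_Pt (hWc i hi)))).differentiable (by simp) p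
    have dterm : ∀ j ∈ Finset.Icc 1 n, DifferentiableAt ℝ
        (fun q => FA i j q * Pt (W j) q + Pt (FA i j) q * W j q) p := fun j hj =>
      (((hFAc i hi j hj).differentiable (by simp) p).mul
        ((contDiff_Pt (hWc j hj)).differentiable (by simp) p)).add
      (((contDiff_Pt (hFAc i hi j hj)).differentiable (by simp) p).mul
        ((hWc j hj).differentiable (by simp) p))
    rw [Pt_add (dPtPtW.fun_sub (dPxxPtW.const_mul (ε i))) (DifferentiableAt.fun_sum dterm),
      Pt_sub dPtPtW (dPxxPtW.const_mul (ε i)),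
      Pt_const_mul dPxxPtW (ε i),
      Pt_sum dterm,
      Finset.sum_congr rfl (fun j hj => by
        rw [Pt_add (((hFAc i hi j hj).differentiable (by simp) p).fun_mul
            ((contDiff_Pt (hWc j hj)).differentiable (by simp) p))
            (((contDiff_Pt (hFAc i hi j hj)).differentiable (by simp) p).fun_mul
            ((hWc j hj).differentiable (by simp) p)),
          Pt_mul ((hFAc i hi j hj).differentiable (by simp) p)
            ((contDiff_Pt (hWc j hj)).differentiable (by simp) p),
          Pt_mul ((contDiff_Pt (hFAc i hi j hj)).differentiable (by simp) p)
            ((hWc j hj).differentiable (by simp) p)])] at hPtH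
    have hcl : Pt (Px (Px (Pt (W i)))) p = Px (Px (Pt (Pt (W i)))) p := by
      have c1 : Px (Pt (Px (Pt (W i)))) p = Pt (Px (Px (Pt (W i)))) p :=
        Pt_Px_comm (contDiff_Px (contDiff_Pt (hWc i hi))) p
      have c2 : Pt (Px (Pt (W i))) = Px (Pt (Pt (W i))) :=
        funext fun q => (Pt_Px_comm (contDiff_Pt (hWc i hi)) q).symm
      rw [← c1, c2]
    rw [hcl] at hPtH
    have hsplit : ∑ j ∈ Finset.Icc 1 n,
        (Pt (FA i j) p * Pt (W j) p + FA i j p * Pt (Pt (W j)) p +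
          (Pt (Pt (FA i j)) p * W j p + Pt (FA i j) p * Pt (W j) p)) =
        ∑ j ∈ Finset.Icc 1 n, FA i j p * Pt (Pt (W j)) p +
        ∑ j ∈ Finset.Icc 1 n,
          (2 * (Pt (FA i j) p * Pt (W j) p) + Pt (Pt (FA i j)) p * W j p) := by
      rw [← Finset.sum_add_distrib]
      exact Finset.sum_congr rfl fun j _ => by ring
    rw [hsplit] at hPtH
    linarith
  -- boundary values for z₂
  have hZ20 : ∀ i ∈ Finset.Icc 1 n, ∀ x ∈ Icc (0:ℝ) 1, Pt (Pt (W i)) (x, 0) = 0 := by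
    intro i hi
    refine horiz_ext_zero (contDiff_Pt (contDiff_Pt (hWc i hi))).continuous ?_
    intro x hx
    have hxI : x ∈ Icc (0:ℝ) 1 := ⟨hx.1.le, hx.2.le⟩
    have h := hE1Rw i hi (x, 0) ⟨hxI, ⟨le_refl 0, hT.le⟩⟩
    have hPxx := PxPx_zero_seg (contDiff_Pt (hWc i hi)) (hZ0 i hi) x hxI
    have hsum0 : ∑ j ∈ Finset.Icc 1 n,
        (FA i j (x, 0) * Pt (W j) (x, 0) + Pt (FA i j) (x, 0) * W j (x, 0)) = 0 :=
      Finset.sum_eq_zero fun j hj => by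
        rw [hZ0 j hj x hxI, hW0' j hj x hxI, mul_zero, mul_zero, add_zero]
    rw [hPxx, hsum0] at h
    linarith
  have hZ21 : ∀ i ∈ Finset.Icc 1 n, ∀ t ∈ Icc (0:ℝ) T, Pt (Pt (W i)) (1, t) = 0 := by
    intro i hi t ht
    have h := vert_step hT (contDiff_Pt (hWc i hi)) (contDiff_const) (G := fun _ => (0:ℝ))
      (fun s hs => by rw [hZ1 i hi s hs]) t ht
    rw [h, Pt_const]
  have hZ2Leq : ∀ i ∈ Finset.Icc 1 n, ∀ t ∈ Icc (0:ℝ) T,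
      Pt (Pt (W i)) (0, t) = Pt (Pt (Fφ i)) (0, t) - Pt (Pt (U0 i)) (0, t) := by
    intro i hi t ht
    have h := vert_step hT (contDiff_Pt (hWc i hi))
      ((contDiff_Pt (hFφc i hi)).sub (contDiff_Pt (hU0c i hi)))
      (G := fun q => Pt (Fφ i) q - Pt (U0 i) q) (fun s hs => hZLeq i hi s hs) t ht
    rw [h]
    exact Pt_sub ((contDiff_Pt (hFφc i hi)).differentiable (by simp) _)
      ((contDiff_Pt (hU0c i hi)).differentiable (by simp) _)
  -- bound for z₂
  have hZ2bd : ∀ i ∈ Finset.Icc 1 n, ∀ p ∈ Icc (0:ℝ) 1 ×ˢ Icc (0:ℝ) T,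
      |Pt (Pt (W i)) p| ≤ (D2 + S2 + 1) * Real.exp T * Real.exp (-β * p.1) := by
    refine layerBound n hn T α β hT hα hβ0 FA ε hε0 hkey hFAoff hFAsum
      (fun i => Pt (Pt (W i))) (fun i hi => contDiff_Pt (contDiff_Pt (hWc i hi)))
      D2 S2 hD2nn hS2nn ?_ hZ20 hZ21 ?_
    · intro i hi p hx ht
      have hpR : p ∈ Icc (0:ℝ) 1 ×ˢ Icc (0:ℝ) T := ⟨⟨hx.1.le, hx.2.le⟩, ⟨ht.1.le, ht.2.le⟩⟩
      show |Pt (Pt (Pt (W i))) p - ε i * Px (Px (Pt (Pt (W i)))) p +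
        ∑ j ∈ Finset.Icc 1 n, FA i j p * Pt (Pt (W j)) p| ≤ S2 * Real.exp (-β * p.1)
      rw [hZ2E i hi p ⟨hx, ht⟩, abs_neg]
      have hs : |∑ j ∈ Finset.Icc 1 n,
          (2 * (Pt (FA i j) p * Pt (W j) p) + Pt (Pt (FA i j)) p * W j p)| ≤
          n * (KA * (C0 * Real.exp (-β * p.1)) + 2 * (KA * (C1 * Real.exp (-β * p.1)))) := by
        refine hsumbd _ _ ?_ ?_
        · have e1 : (0:ℝ) ≤ KA * (C0 * Real.exp (-β * p.1)) :=
            mul_nonneg hKA0 (mul_nonneg hC0pos.le (Real.exp_nonneg _))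
          have e2 : (0:ℝ) ≤ KA * (C1 * Real.exp (-β * p.1)) :=
            mul_nonneg hKA0 (mul_nonneg hC1pos.le (Real.exp_nonneg _))
          linarith
        · intro j hj
          have h1 : |Pt (FA i j) p * Pt (W j) p| ≤ KA * (C1 * Real.exp (-β * p.1)) := by
            rw [abs_mul]
            exact mul_le_mul (hAbd i hi j hj p hpR).2.1 (hZbdC1 j hj p hpR)
              (abs_nonneg _) hKA0
          have h2 : |Pt (Pt (FA i j)) p * W j p| ≤ KA * (C0 * Real.exp (-β * p.1)) := by
            rw [abs_mul]
            exact mul_le_mul (hAbd i hi j hj p hpR).2.2 (hWbdC0 j hj p hpR)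
              (abs_nonneg _) hKA0
          calc |2 * (Pt (FA i j) p * Pt (W j) p) + Pt (Pt (FA i j)) p * W j p| ≤
                |2 * (Pt (FA i j) p * Pt (W j) p)| + |Pt (Pt (FA i j)) p * W j p| :=
                  abs_add_le _ _
            _ = 2 * |Pt (FA i j) p * Pt (W j) p| + |Pt (Pt (FA i j)) p * W j p| := by
                  rw [abs_mul, abs_of_nonneg (by norm_num : (0:ℝ) ≤ 2)]
            _ ≤ KA * (C0 * Real.exp (-β * p.1)) + 2 * (KA * (C1 * Real.exp (-β * p.1))) := by
                  linarith
      calc |∑ j ∈ Finset.Icc 1 n,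
            (2 * (Pt (FA i j) p * Pt (W j) p) + Pt (Pt (FA i j)) p * W j p)| ≤
            n * (KA * (C0 * Real.exp (-β * p.1)) + 2 * (KA * (C1 * Real.exp (-β * p.1)))) := hs
        _ = S2 * Real.exp (-β * p.1) := by rw [hS2def]; ring
    · intro i hi t ht
      have h0T : ((0:ℝ), t) ∈ Icc (0:ℝ) 1 ×ˢ Icc (0:ℝ) T := ⟨⟨le_refl 0, zero_le_one⟩, ht⟩
      show |Pt (Pt (W i)) (0, t)| ≤ D2
      rw [hZ2Leq i hi t ht, hD2def]
      have h1 := (hφbd i hi (0, t) h0T).2.2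
      have h2 := hPtPtU0bd i hi (0, t) h0T
      calc |Pt (Pt (Fφ i)) (0,t) - Pt (Pt (U0 i)) (0,t)| ≤
            |Pt (Pt (Fφ i)) (0,t)| + |Pt (Pt (U0 i)) (0,t)| := abs_sub _ _
        _ ≤ Kφ + M3 := by linarith
  have hZ2bdC2 : ∀ i ∈ Finset.Icc 1 n, ∀ p ∈ Icc (0:ℝ) 1 ×ˢ Icc (0:ℝ) T,
      |Pt (Pt (W i)) p| ≤ C2 * Real.exp (-β * p.1) := by
    intro i hi p hp
    calc |Pt (Pt (W i)) p| ≤ (D2 + S2 + 1) * Real.exp T * Real.exp (-β * p.1) :=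
          hZ2bd i hi p hp
      _ = C2 * Real.exp (-β * p.1) := by rw [hC2def]
  -- conclusion
  intro i hi x hx t ht l hl
  have hpR : ((x, t) : ℝ × ℝ) ∈ Icc (0:ℝ) 1 ×ˢ Icc (0:ℝ) T := ⟨hx, ht⟩
  have hexp : -x * Real.sqrt (α / ε n) = -β * x := by rw [hβdef]; ring
  rw [hexp]
  have hexp0 : (0:ℝ) ≤ Real.exp (-β * x) := Real.exp_nonneg _
  have hmul : ∀ c : ℝ, c ≤ C0 + C1 + C2 → c * Real.exp (-β * x) ≤
      (C0 + C1 + C2) * Real.exp (-β * x) := fun c hc =>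
    mul_le_mul_of_nonneg_right hc hexp0
  interval_cases l
  · rw [iteratedDeriv_zero]
    calc |w i x t| = |W i (x, t)| := rfl
      _ ≤ C0 * Real.exp (-β * x) := hWbdC0 i hi (x, t) hpR
      _ ≤ (C0 + C1 + C2) * Real.exp (-β * x) := hmul C0 (by linarith)
  · rw [iteratedDeriv_one]
    have e : deriv (fun s => w i x s) t = Pt (W i) (x, t) := deriv_Pt (hWc i hi) x t
    rw [e]
    calc |Pt (W i) (x, t)| ≤ C1 * Real.exp (-β * x) := hZbdC1 i hi (x, t) hpR
      _ ≤ (C0 + C1 + C2) * Real.exp (-β * x) := hmul C1 (by linarith)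
  · have e0 : iteratedDeriv 2 (fun s => w i x s) t = deriv (deriv (fun s => w i x s)) t := by
      rw [show (2:ℕ) = 1 + 1 from rfl, iteratedDeriv_succ, iteratedDeriv_one]
    have e1 : deriv (fun s => w i x s) = fun t' => Pt (W i) (x, t') :=
      funext fun t' => deriv_Pt (hWc i hi) x t'
    have e2 : deriv (fun t' => Pt (W i) (x, t')) t = Pt (Pt (W i)) (x, t) :=
      deriv_Pt (contDiff_Pt (hWc i hi)) x t
    rw [e0, e1, e2]
    calc |Pt (Pt (W i)) (x, t)| ≤ C2 * Real.exp (-β * x) := hZ2bdC2 i hi (x, t) hpR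
      _ ≤ (C0 + C1 + C2) * Real.exp (-β * x) := hmul C2 (by linarith)
end

section
/- Existence, uniqueness and formula for the layer-interaction points: for all i,j with 1 ≤ i < j ≤ n and every s with 0 < s ≤ 3/2, there exists a unique point x^{(s)}_{i,j} > 0 such that B_i^L(x^{(s)}_{i,j})/ε_i^s = B_j^L(x^{(s)}_{i,j})/ε_j^s; moreover x^{(s)}_{i,j} = 2s·ln(√(ε_j)/√(ε_i)) / (√α·(1/√ε_i − 1/√ε_j)). -/
/-- `layerEq α s ε i j x` says `B_i^L(x)/ε_i^s = B_j^L(x)/ε_j^s`, where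
`B_i^L(x) = exp(−x√(α/ε_i))`. -/
def layerEq (α s : ℝ) (ε : ℕ → ℝ) (i j : ℕ) (x : ℝ) : Prop :=
  Real.exp (-x * Real.sqrt (α / ε i)) / ε i ^ s
    = Real.exp (-x * Real.sqrt (α / ε j)) / ε j ^ s

/-- **Existence, uniqueness and formula for the layer-interaction points**
(first part of Lemma 5 of the paper): for `1 ≤ i < j ≤ n` and `0 < s ≤ 3/2`
there is a unique `x^{(s)}_{i,j} > 0` with
`B_i^L(x)/ε_i^s = B_j^L(x)/ε_j^s`, and it is given by
`2s·ln(√ε_j/√ε_i)/(√α(1/√ε_i − 1/√ε_j))`. -/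
theorem stmt_7
    (n : ℕ) (hn : 1 ≤ n) (α : ℝ) (hα : 0 < α)
    (ε : ℕ → ℝ)
    (hε0 : ∀ i ∈ Finset.Icc 1 n, 0 < ε i)
    (hε1 : ∀ i ∈ Finset.Icc 1 n, ε i ≤ 1)
    (hεmono : ∀ i j : ℕ, 1 ≤ i → i < j → j ≤ n → ε i < ε j)
    (i j : ℕ) (hi : 1 ≤ i) (hij : i < j) (hj : j ≤ n)
    (s : ℝ) (hs0 : 0 < s) (hs : s ≤ 3 / 2) :
    (∃! x : ℝ, 0 < x ∧ layerEq α s ε i j x) ∧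
      ∀ x : ℝ, 0 < x → layerEq α s ε i j x →
        x = 2 * s * Real.log (Real.sqrt (ε j) / Real.sqrt (ε i))
              / (Real.sqrt α * (1 / Real.sqrt (ε i) - 1 / Real.sqrt (ε j))) := by
  have hεi : 0 < ε i := hε0 i (Finset.mem_Icc.2 ⟨hi, le_trans (le_of_lt hij) hj⟩)
  have hεj : 0 < ε j := hε0 j (Finset.mem_Icc.2 ⟨le_trans hi (le_of_lt hij), hj⟩)
  have hlt : ε i < ε j := hεmono i j hi hij hj
  have hsi : 0 < Real.sqrt (ε i) := Real.sqrt_pos.2 hεi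
  have hsj : 0 < Real.sqrt (ε j) := Real.sqrt_pos.2 hεj
  have hsa : 0 < Real.sqrt α := Real.sqrt_pos.2 hα
  set a := Real.sqrt (α / ε i) with ha_def
  set b := Real.sqrt (α / ε j) with hb_def
  have ha : a = Real.sqrt α / Real.sqrt (ε i) := Real.sqrt_div hα.le _
  have hb : b = Real.sqrt α / Real.sqrt (ε j) := Real.sqrt_div hα.le _
  have hab : b < a := by
    rw [ha, hb]
    apply div_lt_div_of_pos_left hsa hsi
    exact Real.sqrt_lt_sqrt hεi.le hlt
  have habpos : 0 < a - b := sub_pos.2 hab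
  have hlog : Real.log (ε i) < Real.log (ε j) := Real.log_lt_log hεi hlt
  set X := s * (Real.log (ε j) - Real.log (ε i)) / (a - b) with hX_def
  have hXpos : 0 < X := div_pos (mul_pos hs0 (sub_pos.2 hlog)) habpos
  -- the main equivalence
  have key : ∀ x : ℝ, layerEq α s ε i j x ↔ x = X := by
    intro x
    have h1 : (ε i : ℝ) ^ s = Real.exp (Real.log (ε i) * s) :=
      Real.rpow_def_of_pos hεi s
    have h2 : (ε j : ℝ) ^ s = Real.exp (Real.log (ε j) * s) :=
      Real.rpow_def_of_pos hεj s
    unfold layerEq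
    rw [h1, h2, ← Real.exp_sub, ← Real.exp_sub, Real.exp_eq_exp]
    constructor
    · intro h
      have : x * (a - b) = s * (Real.log (ε j) - Real.log (ε i)) := by ring_nf; linarith
      rw [hX_def, eq_div_iff (ne_of_gt habpos)]
      linarith [this]
    · intro h
      have hx : x * (a - b) = s * (Real.log (ε j) - Real.log (ε i)) := by
        rw [h, hX_def, div_mul_cancel₀ _ (ne_of_gt habpos)]
      nlinarith [hx]
  -- the formula equals X
  have hform : 2 * s * Real.log (Real.sqrt (ε j) / Real.sqrt (ε i))
      / (Real.sqrt α * (1 / Real.sqrt (ε i) - 1 / Real.sqrt (ε j))) = X := by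
    have hnum : Real.log (Real.sqrt (ε j) / Real.sqrt (ε i))
        = Real.log (ε j) / 2 - Real.log (ε i) / 2 := by
      rw [Real.log_div (ne_of_gt hsj) (ne_of_gt hsi), Real.log_sqrt hεj.le,
        Real.log_sqrt hεi.le]
    have hden : Real.sqrt α * (1 / Real.sqrt (ε i) - 1 / Real.sqrt (ε j)) = a - b := by
      rw [ha, hb]; field_simp
    rw [hnum, hden, hX_def]
    ring
  refine ⟨⟨X, ⟨hXpos, (key X).2 rfl⟩, ?_⟩, ?_⟩
  · rintro y ⟨-, hy⟩; exact (key y).1 hy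
  · intro x _ hx; rw [hform]; exact (key x).1 hx
end

section
/- Separation property of the layer-interaction points: for 1 ≤ i < j ≤ n and 0 < s ≤ 3/2, with x^{(s)}_{i,j} the unique point where B_i^L(x)/ε_i^s = B_j^L(x)/ε_j^s, one has B_i^L(x)/ε_i^s > B_j^L(x)/ε_j^s for all x ∈ [0, x^{(s)}_{i,j}) and B_i^L(x)/ε_i^s < B_j^L(x)/ε_j^s for all x ∈ (x^{(s)}_{i,j}, 1]. -/
/-- **Separation property of the layer-interaction points** (inequality (14)
of the paper): for `1 ≤ i < j ≤ n` and `0 < s ≤ 3/2`, if `x^{(s)}_{i,j}` is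
the (unique positive) point at which `B_i^L/ε_i^s = B_j^L/ε_j^s`, then
`B_i^L(x)/ε_i^s > B_j^L(x)/ε_j^s` on `[0, x^{(s)}_{i,j})` and
`B_i^L(x)/ε_i^s < B_j^L(x)/ε_j^s` on `(x^{(s)}_{i,j}, 1]`. -/
theorem stmt_8
    (n : ℕ) (hn : 1 ≤ n) (α : ℝ) (hα : 0 < α)
    (ε : ℕ → ℝ)
    (hε0 : ∀ i ∈ Finset.Icc 1 n, 0 < ε i)
    (hε1 : ∀ i ∈ Finset.Icc 1 n, ε i ≤ 1)
    (hεmono : ∀ i j : ℕ, 1 ≤ i → i < j → j ≤ n → ε i < ε j)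
    (i j : ℕ) (hi : 1 ≤ i) (hij : i < j) (hj : j ≤ n)
    (s : ℝ) (hs0 : 0 < s) (hs : s ≤ 3 / 2)
    (xij : ℝ) (hxij0 : 0 < xij) (hxijEq : layerEq α s ε i j xij) :
    (∀ x : ℝ, 0 ≤ x → x < xij →
        Real.exp (-x * Real.sqrt (α / ε j)) / ε j ^ s
          < Real.exp (-x * Real.sqrt (α / ε i)) / ε i ^ s) ∧
    (∀ x : ℝ, xij < x → x ≤ 1 →
        Real.exp (-x * Real.sqrt (α / ε i)) / ε i ^ s
          < Real.exp (-x * Real.sqrt (α / ε j)) / ε j ^ s) := by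
  have hiI : i ∈ Finset.Icc 1 n := Finset.mem_Icc.2 ⟨hi, le_trans (Nat.le_of_lt hij) hj⟩
  have hjI : j ∈ Finset.Icc 1 n := Finset.mem_Icc.2 ⟨le_trans hi (Nat.le_of_lt hij), hj⟩
  have hεi : 0 < ε i := hε0 i hiI
  have hεj : 0 < ε j := hε0 j hjI
  set a := Real.sqrt (α / ε i) with ha
  set b := Real.sqrt (α / ε j) with hb
  have hab : b < a := by
    apply Real.sqrt_lt_sqrt (le_of_lt (div_pos hα hεj))
    exact div_lt_div_of_pos_left hα hεi (hεmono i j hi hij hj)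
  have hpos : 0 < Real.exp (-xij * b) / ε j ^ s :=
    div_pos (Real.exp_pos _) (Real.rpow_pos_of_pos hεj s)
  have key : ∀ x w c : ℝ, Real.exp ((xij - x) * w) * (Real.exp (-xij * w) / c)
      = Real.exp (-x * w) / c := by
    intro x w c
    have h : Real.exp ((xij - x) * w) * Real.exp (-xij * w) = Real.exp (-x * w) := by
      rw [← Real.exp_add]; ring_nf
    rw [← h, mul_div_assoc]
  have hEq : Real.exp (-xij * a) / ε i ^ s = Real.exp (-xij * b) / ε j ^ s := hxijEq
  constructor
  · intro x _ hx
    rw [← key x b (ε j ^ s), ← key x a (ε i ^ s), hEq]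
    exact mul_lt_mul_of_pos_right
      (Real.exp_lt_exp.2 (mul_lt_mul_of_pos_left hab (sub_pos.2 hx))) hpos
  · intro x hx _
    rw [← key x b (ε j ^ s), ← key x a (ε i ^ s), hEq]
    refine mul_lt_mul_of_pos_right (Real.exp_lt_exp.2 ?_) hpos
    have hneg : xij - x < 0 := sub_neg.2 hx
    nlinarith
end

section
/- Monotone ordering of the layer-interaction points in their indices: for 0 < s ≤ 3/2, x^{(s)}_{i,j} < x^{(s)}_{i+1,j} whenever i+1 < j ≤ n, and x^{(s)}_{i,j} < x^{(s)}_{i,j+1} whenever i < j < n. -/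
/-- Solving the layer equation explicitly:
`x = 2s (log a − log b)/(a − b)` with `a = √(α/e)`, `b = √(α/f)`. -/
lemma layer_sol {α s e f x : ℝ} (hα : 0 < α) (he : 0 < e) (hef : e < f)
    (h : Real.exp (-x * Real.sqrt (α / e)) / e ^ s
       = Real.exp (-x * Real.sqrt (α / f)) / f ^ s) :
    x = 2 * s * (Real.log (Real.sqrt (α / e)) - Real.log (Real.sqrt (α / f)))
        / (Real.sqrt (α / e) - Real.sqrt (α / f)) := by
  have hf : 0 < f := he.trans hef
  have hae : 0 < α / e := div_pos hα he
  have haf : 0 < α / f := div_pos hα hf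
  have hba : Real.sqrt (α / f) < Real.sqrt (α / e) := by
    apply Real.sqrt_lt_sqrt haf.le
    exact div_lt_div_of_pos_left hα he hef
  have hne : Real.sqrt (α / e) - Real.sqrt (α / f) ≠ 0 := by linarith
  have hle : Real.log (Real.sqrt (α / e)) = (Real.log α - Real.log e) / 2 := by
    rw [Real.log_sqrt hae.le, Real.log_div (ne_of_gt hα) (ne_of_gt he)]
  have hlf : Real.log (Real.sqrt (α / f)) = (Real.log α - Real.log f) / 2 := by
    rw [Real.log_sqrt haf.le, Real.log_div (ne_of_gt hα) (ne_of_gt hf)]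
  have hes : e ^ s = Real.exp (Real.log e * s) := Real.rpow_def_of_pos he s
  have hfs : f ^ s = Real.exp (Real.log f * s) := Real.rpow_def_of_pos hf s
  rw [hes, hfs, ← Real.exp_sub, ← Real.exp_sub] at h
  have h' := Real.exp_injective h
  rw [eq_div_iff hne]
  linear_combination (-1 : ℝ) * h' - 2 * s * hle + 2 * s * hlf

/-- **Monotone ordering of the layer-interaction points in their indices**
(inequality (15) of the paper): for `0 < s ≤ 3/2`,
`x^{(s)}_{i,j} < x^{(s)}_{i+1,j}` whenever `i+1 < j ≤ n`, and
`x^{(s)}_{i,j} < x^{(s)}_{i,j+1}` whenever `i < j < n`.  Each point is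
characterised as the unique positive solution of the corresponding
layer equation. -/
theorem stmt_9
    (n : ℕ) (hn : 1 ≤ n) (α : ℝ) (hα : 0 < α)
    (ε : ℕ → ℝ)
    (hε0 : ∀ i ∈ Finset.Icc 1 n, 0 < ε i)
    (hε1 : ∀ i ∈ Finset.Icc 1 n, ε i ≤ 1)
    (hεmono : ∀ i j : ℕ, 1 ≤ i → i < j → j ≤ n → ε i < ε j)
    (s : ℝ) (hs0 : 0 < s) (hs : s ≤ 3 / 2) :
    (∀ i j : ℕ, 1 ≤ i → i + 1 < j → j ≤ n →
      ∀ x₁ x₂ : ℝ,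
        0 < x₁ → layerEq α s ε i j x₁ →
        0 < x₂ → layerEq α s ε (i + 1) j x₂ →
        x₁ < x₂) ∧
    (∀ i j : ℕ, 1 ≤ i → i < j → j + 1 ≤ n →
      ∀ x₁ x₂ : ℝ,
        0 < x₁ → layerEq α s ε i j x₁ →
        0 < x₂ → layerEq α s ε i (j + 1) x₂ →
        x₁ < x₂) := by
  have hmem : ∀ k : ℕ, 1 ≤ k → k ≤ n → 0 < ε k := fun k h1 h2 =>
    hε0 k (Finset.mem_Icc.mpr ⟨h1, h2⟩)
  have ha_pos : ∀ k : ℕ, 1 ≤ k → k ≤ n → 0 < Real.sqrt (α / ε k) := fun k h1 h2 =>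
    Real.sqrt_pos.mpr (div_pos hα (hmem k h1 h2))
  have ha_anti : ∀ i j : ℕ, 1 ≤ i → i < j → j ≤ n →
      Real.sqrt (α / ε j) < Real.sqrt (α / ε i) := by
    intro i j h1 h2 h3
    apply Real.sqrt_lt_sqrt (div_pos hα (hmem j (h1.trans h2.le) h3)).le
    exact div_lt_div_of_pos_left hα (hmem i h1 (h2.le.trans h3)) (hεmono i j h1 h2 h3)
  constructor
  · intro i j hi hij hj x₁ x₂ hx₁ h₁ hx₂ h₂
    have hi1 : i + 1 ≤ n := le_trans hij.le hj
    have hin : i ≤ n := le_trans (Nat.le_succ i) hi1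
    have e1 := layer_sol hα (hmem i hi hin) (hεmono i j hi (lt_trans (Nat.lt_succ_self i) hij) hj) h₁
    have e2 := layer_sol hα (hmem (i+1) (le_trans hi (Nat.le_succ i)) hi1)
      (hεmono (i+1) j (le_trans hi (Nat.le_succ i)) hij hj) h₂
    rw [e1, e2]
    set a := Real.sqrt (α / ε i)
    set b := Real.sqrt (α / ε (i+1))
    set c := Real.sqrt (α / ε j)
    have hc : (0:ℝ) < c := ha_pos j (le_trans hi (le_trans (Nat.le_succ i) hij.le)) hj
    have hcb : c < b := ha_anti (i+1) j (le_trans hi (Nat.le_succ i)) hij hj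
    have hba : b < a := ha_anti i (i+1) hi (Nat.lt_succ_self i) hi1
    have key := strictConcaveOn_log_Ioi.secant_strict_mono (a := c)
      (Set.mem_Ioi.mpr hc) (Set.mem_Ioi.mpr (hc.trans hcb))
      (Set.mem_Ioi.mpr (hc.trans (hcb.trans hba))) (ne_of_gt hcb)
      (ne_of_gt (hcb.trans hba)) hba
    have h2s : (0:ℝ) < 2 * s := by linarith
    calc 2 * s * (Real.log a - Real.log c) / (a - c)
        = 2 * s * ((Real.log a - Real.log c) / (a - c)) := by ring
      _ < 2 * s * ((Real.log b - Real.log c) / (b - c)) := by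
          exact (mul_lt_mul_iff_right₀ h2s).mpr key
      _ = 2 * s * (Real.log b - Real.log c) / (b - c) := by ring
  · intro i j hi hij hj x₁ x₂ hx₁ h₁ hx₂ h₂
    have hjn : j ≤ n := le_trans (Nat.le_succ j) hj
    have hin : i ≤ n := le_trans hij.le hjn
    have e1 := layer_sol hα (hmem i hi hin) (hεmono i j hi hij hjn) h₁
    have e2 := layer_sol hα (hmem i hi hin)
      (hεmono i (j+1) hi (lt_trans hij (Nat.lt_succ_self j)) hj) h₂
    rw [e1, e2]
    set a := Real.sqrt (α / ε i)
    set b := Real.sqrt (α / ε j)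
    set c := Real.sqrt (α / ε (j+1))
    have hc : (0:ℝ) < c := ha_pos (j+1) (le_trans hi (le_of_lt (lt_trans hij (Nat.lt_succ_self j)))) hj
    have hcb : c < b := ha_anti j (j+1) (le_trans hi hij.le) (Nat.lt_succ_self j) hj
    have hba : b < a := ha_anti i j hi hij hjn
    have key := strictConcaveOn_log_Ioi.secant_strict_mono (a := a)
      (Set.mem_Ioi.mpr (hc.trans (hcb.trans hba))) (Set.mem_Ioi.mpr hc)
      (Set.mem_Ioi.mpr (hc.trans hcb)) (ne_of_lt (hcb.trans hba))
      (ne_of_lt hba) hcb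
    have h2s : (0:ℝ) < 2 * s := by linarith
    have hsym1 : (Real.log a - Real.log b) / (a - b)
        = (Real.log b - Real.log a) / (b - a) := by
      rw [← neg_div_neg_eq]; ring_nf
    have hsym2 : (Real.log a - Real.log c) / (a - c)
        = (Real.log c - Real.log a) / (c - a) := by
      rw [← neg_div_neg_eq]; ring_nf
    calc 2 * s * (Real.log a - Real.log b) / (a - b)
        = 2 * s * ((Real.log b - Real.log a) / (b - a)) := by rw [mul_div_assoc, hsym1]
      _ < 2 * s * ((Real.log c - Real.log a) / (c - a)) := (mul_lt_mul_iff_right₀ h2s).mpr key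
      _ = 2 * s * (Real.log a - Real.log c) / (a - c) := by rw [mul_div_assoc, hsym2]
end

section
/- Size bound for the layer-interaction points: for 1 ≤ i < j ≤ n and 0 < s ≤ 3/2, x^{(s)}_{i,j} < 2s√(ε_j/α); consequently, if in addition max_{1≤i≤n} √ε_i ≤ √α/6, then x^{(s)}_{i,j} ∈ (0, 1/2). -/
lemma aux_ineq (ri rj sa s x : ℝ) (hri : 0 < ri) (hrij : ri < rj) (hsa : 0 < sa)
    (hs : 0 < s)
    (hx : x * (sa / ri - sa / rj) = s * (2 * Real.log rj - 2 * Real.log ri)) :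
    x < 2 * s * (rj / sa) := by
  have hrj : 0 < rj := hri.trans hrij
  have hd : 0 < sa / ri - sa / rj := by
    have := div_lt_div_of_pos_left hsa hri hrij
    linarith
  have hlog : Real.log (rj / ri) < rj / ri - 1 := by
    refine Real.log_lt_sub_one_of_pos (by positivity) ?_
    have : (1 : ℝ) < rj / ri := (one_lt_div hri).mpr hrij
    exact ne_of_gt this
  have hlog2 : Real.log (rj / ri) = Real.log rj - Real.log ri :=
    Real.log_div hrj.ne' hri.ne'
  -- so s*(2*log rj - 2*log ri) < 2*s*(rj/ri - 1)
  have h1 : s * (2 * Real.log rj - 2 * Real.log ri) < 2 * s * (rj / ri - 1) := by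
    nlinarith [hlog, hlog2]
  have h2 : 2 * s * (rj / sa) * (sa / ri - sa / rj) = 2 * s * (rj / ri - 1) := by
    field_simp
  have h3 : x * (sa / ri - sa / rj) < 2 * s * (rj / sa) * (sa / ri - sa / rj) := by
    rw [hx, h2]; exact h1
  exact lt_of_mul_lt_mul_right h3 hd.le |>.trans_le le_rfl

/-- **Size bound for the layer-interaction points** (inequality (16) of the
paper): for `1 ≤ i < j ≤ n` and `0 < s ≤ 3/2`, the point `x^{(s)}_{i,j}`
(characterised as a positive solution of the layer equation) satisfies
`x^{(s)}_{i,j} < 2s√(ε_j/α)`; consequently, if moreover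
`max_{1 ≤ k ≤ n} √ε_k ≤ √α/6`, then `x^{(s)}_{i,j} ∈ (0, 1/2)`. -/
theorem stmt_10
    (n : ℕ) (hn : 1 ≤ n) (α : ℝ) (hα : 0 < α)
    (ε : ℕ → ℝ)
    (hε0 : ∀ i ∈ Finset.Icc 1 n, 0 < ε i)
    (hε1 : ∀ i ∈ Finset.Icc 1 n, ε i ≤ 1)
    (hεmono : ∀ i j : ℕ, 1 ≤ i → i < j → j ≤ n → ε i < ε j)
    (i j : ℕ) (hi : 1 ≤ i) (hij : i < j) (hj : j ≤ n)
    (s : ℝ) (hs0 : 0 < s) (hs : s ≤ 3 / 2)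
    (xij : ℝ) (hxij0 : 0 < xij) (hxijEq : layerEq α s ε i j xij) :
    xij < 2 * s * Real.sqrt (ε j / α) ∧
      ((∀ k ∈ Finset.Icc 1 n, Real.sqrt (ε k) ≤ Real.sqrt α / 6) →
        xij ∈ Set.Ioo (0 : ℝ) (1 / 2)) := by
  have hiIcc : i ∈ Finset.Icc 1 n := Finset.mem_Icc.mpr ⟨hi, le_trans hij.le hj⟩
  have hjIcc : j ∈ Finset.Icc 1 n := Finset.mem_Icc.mpr ⟨le_trans hi hij.le, hj⟩
  have hεi : 0 < ε i := hε0 i hiIcc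
  have hεj : 0 < ε j := hε0 j hjIcc
  have hεij : ε i < ε j := hεmono i j hi hij hj
  set ri := Real.sqrt (ε i) with hri_def
  set rj := Real.sqrt (ε j) with hrj_def
  set sa := Real.sqrt α with hsa_def
  have hri : 0 < ri := Real.sqrt_pos.mpr hεi
  have hrj : 0 < rj := Real.sqrt_pos.mpr hεj
  have hsa : 0 < sa := Real.sqrt_pos.mpr hα
  have hrij : ri < rj := Real.sqrt_lt_sqrt hεi.le hεij
  have hai : Real.sqrt (α / ε i) = sa / ri := Real.sqrt_div hα.le _
  have haj : Real.sqrt (α / ε j) = sa / rj := Real.sqrt_div hα.le _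
  have hsqj : Real.sqrt (ε j / α) = rj / sa := Real.sqrt_div hεj.le _
  have hlogi : Real.log (ε i) = 2 * Real.log ri := by
    rw [hri_def, Real.log_sqrt hεi.le]; ring
  have hlogj : Real.log (ε j) = 2 * Real.log rj := by
    rw [hrj_def, Real.log_sqrt hεj.le]; ring
  -- turn the layer equation into a linear relation
  have hEq : Real.exp (-xij * (sa / ri)) * ε j ^ s
      = Real.exp (-xij * (sa / rj)) * ε i ^ s := by
    have h := hxijEq
    rw [layerEq, hai, haj, div_eq_div_iff (by positivity) (by positivity)] at h
    exact h
  have hlogEq : -xij * (sa / ri) + s * Real.log (ε j)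
      = -xij * (sa / rj) + s * Real.log (ε i) := by
    have h := congrArg Real.log hEq
    rwa [Real.log_mul (Real.exp_pos _).ne' (by positivity),
      Real.log_mul (Real.exp_pos _).ne' (by positivity),
      Real.log_exp, Real.log_exp, Real.log_rpow hεj, Real.log_rpow hεi] at h
  have hx : xij * (sa / ri - sa / rj)
      = s * (2 * Real.log rj - 2 * Real.log ri) := by
    rw [← hlogi, ← hlogj]; ring_nf; ring_nf at hlogEq; linarith
  have hmain : xij < 2 * s * Real.sqrt (ε j / α) := by
    rw [hsqj]; exact aux_ineq ri rj sa s xij hri hrij hsa hs0 hx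
  refine ⟨hmain, fun hmax => ⟨hxij0, ?_⟩⟩
  have hjmax : rj ≤ sa / 6 := hmax j hjIcc
  have h6 : rj / sa ≤ 1 / 6 := by
    rw [div_le_iff₀ hsa]; linarith
  have hpos : 0 < rj / sa := by positivity
  have : 2 * s * (rj / sa) ≤ 1 / 2 := by nlinarith
  rw [hsqj] at hmain
  linarith
end

section
/- Weighted layer values at a transition point: assume d_r > 0 and 0 < s ≤ 2; then for all q and r with 1 ≤ q ≤ n and 1 ≤ r ≤ n, B_q^L(σ_r)/ε_q^s ≤ 1/ε_r^s. -/
/-- Auxiliary downward recursion for the Shishkin transition parameters: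
`shishkinSigmaAux α lnN ε n m = σ_{n-m}`. -/
noncomputable def shishkinSigmaAux (α lnN : ℝ) (ε : ℕ → ℝ) (n : ℕ) : ℕ → ℝ
  | 0 => min (1 / 4) (2 * Real.sqrt (ε n / α) * lnN)
  | m + 1 => min (shishkinSigmaAux α lnN ε n m / 2)
      (2 * Real.sqrt (ε (n - (m + 1)) / α) * lnN)

/-- The Shishkin transition parameter `σ_r` (for `1 ≤ r ≤ n`), with the
convention `σ_0 = 0`. -/
noncomputable def shishkinSigma (α N : ℝ) (ε : ℕ → ℝ) (n r : ℕ) : ℝ :=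
  if r = 0 then 0 else shishkinSigmaAux α (Real.log N) ε n (n - r)

lemma key_log (t L s : ℝ) (ht : 0 < t) (hL : 2 * Real.log 2 ≤ L)
    (hs0 : 0 < s) (hs : s ≤ 2) : s * Real.log t ≤ t * L := by
  have hlog2 : (0.6931471803 : ℝ) < Real.log 2 := Real.log_two_gt_d9
  rcases le_or_gt (Real.log t) 0 with h | h
  · have h1 : s * Real.log t ≤ 0 := mul_nonpos_of_nonneg_of_nonpos hs0.le h
    have h2 : 0 ≤ t * L := by nlinarith
    linarith
  · have hu : 0 < Real.sqrt t := Real.sqrt_pos.mpr ht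
    have hlt : Real.log t = 2 * Real.log (Real.sqrt t) := by
      rw [Real.log_sqrt ht.le]; ring
    have hle : Real.log (Real.sqrt t) ≤ Real.sqrt t - 1 :=
      Real.log_le_sub_one_of_pos hu
    have ht2 : t = Real.sqrt t * Real.sqrt t := (Real.mul_self_sqrt ht.le).symm
    have h1 : s * Real.log t ≤ 2 * Real.log t := by nlinarith
    have h2 : 2 * Real.log t ≤ 4 * Real.sqrt t - 4 := by nlinarith
    have h3 : 4 * Real.sqrt t - 4 ≤ 2 * Real.log 2 * (Real.sqrt t * Real.sqrt t) := by
      nlinarith [sq_nonneg (Real.log 2 * Real.sqrt t - 1)]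
    have h4 : 2 * Real.log 2 * (Real.sqrt t * Real.sqrt t) ≤ L * t := by
      rw [← ht2]; nlinarith
    linarith

/-- **Weighted layer values at a transition point** (inequality (26) of the
paper): for `0 < s ≤ 2` and all `1 ≤ q ≤ n`, `1 ≤ r ≤ n` with `d_r > 0`,
`B_q^L(σ_r)/ε_q^s ≤ 1/ε_r^s`, where `B_q^L(x) = exp(−x√(α/ε_q))`. -/
theorem stmt_13
    (n p : ℕ) (hn : 1 ≤ n) (α : ℝ) (hα : 0 < α)
    (ε : ℕ → ℝ)
    (hε0 : ∀ i ∈ Finset.Icc 1 n, 0 < ε i)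
    (hε1 : ∀ i ∈ Finset.Icc 1 n, ε i ≤ 1)
    (hεmono : ∀ i j : ℕ, 1 ≤ i → i < j → j ≤ n → ε i < ε j)
    (hεsmall : ∀ i ∈ Finset.Icc 1 n, Real.sqrt (ε i) ≤ Real.sqrt α / 6)
    (N : ℕ) (hN : N = 2 ^ (n + p + 1))
    (s : ℝ) (hs0 : 0 < s) (hs : s ≤ 2) :
    ∀ q ∈ Finset.Icc 1 n, ∀ r ∈ Finset.Icc 1 n,
      -- `d_r > 0`, i.e. `σ_r < σ_{r+1}/2` (with `σ_{n+1} = 1/2`)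
      shishkinSigma α (N : ℝ) ε n r
          < (if r < n then shishkinSigma α (N : ℝ) ε n (r + 1) else 1 / 2) / 2 →
      Real.exp (-(shishkinSigma α (N : ℝ) ε n r) * Real.sqrt (α / ε q)) / ε q ^ s
        ≤ (ε r ^ s)⁻¹ := by
  intro q hq r hr hd
  obtain ⟨hq1, hqn⟩ := Finset.mem_Icc.mp hq
  obtain ⟨hr1, hrn⟩ := Finset.mem_Icc.mp hr
  have hεq := hε0 q hq
  have hεr := hε0 r hr
  have hlog2 : (0:ℝ) < Real.log 2 := Real.log_pos (by norm_num)
  have hlnN : 2 * Real.log 2 ≤ Real.log (N : ℝ) := by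
    rw [hN]
    push_cast
    rw [Real.log_pow]
    have h2 : (2:ℝ) ≤ ((n + p + 1 : ℕ) : ℝ) := by exact_mod_cast (by omega : 2 ≤ n + p + 1)
    nlinarith
  have hlnN0 : 0 ≤ Real.log (N : ℝ) := by linarith
  -- identify σ_r
  have hσ : shishkinSigma α (N : ℝ) ε n r
      = 2 * Real.sqrt (ε r / α) * Real.log (N : ℝ) := by
    simp only [shishkinSigma, if_neg (by omega : r ≠ 0)] at hd ⊢
    rcases eq_or_lt_of_le hrn with heq | hlt
    · subst heq
      simp only [Nat.sub_self, lt_irrefl, if_false] at hd ⊢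
      rcases min_cases (1/4 : ℝ) (2 * Real.sqrt (ε r / α) * Real.log (N:ℝ)) with
        ⟨h1, _⟩ | ⟨h1, _⟩
      · exfalso
        have h2 : shishkinSigmaAux α (Real.log (N:ℝ)) ε r 0 = 1/4 := h1
        rw [h2] at hd
        norm_num at hd
      · exact h1
    · have hm : n - r = (n - r - 1) + 1 := by omega
      have hm2 : n - ((n - r - 1) + 1) = r := by omega
      have hm3 : n - (r + 1) = n - r - 1 := by omega
      rw [if_pos hlt, if_neg (by omega : r + 1 ≠ 0), hm3] at hd
      have hrw : shishkinSigmaAux α (Real.log (N:ℝ)) ε n (n - r)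
          = min (shishkinSigmaAux α (Real.log (N:ℝ)) ε n (n - r - 1) / 2)
              (2 * Real.sqrt (ε r / α) * Real.log (N:ℝ)) := by
        conv_lhs => rw [hm]
        rw [shishkinSigmaAux, hm2]
      rw [hrw] at hd ⊢
      rcases min_cases (shishkinSigmaAux α (Real.log (N:ℝ)) ε n (n - r - 1) / 2)
          (2 * Real.sqrt (ε r / α) * Real.log (N:ℝ)) with ⟨h1, _⟩ | ⟨h1, _⟩
      · exfalso; rw [h1] at hd; linarith
      · exact h1
  rw [hσ]
  set t := Real.sqrt (ε r / ε q) with htdef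
  have ht : 0 < t := Real.sqrt_pos.mpr (by positivity)
  have hprod : Real.sqrt (ε r / α) * Real.sqrt (α / ε q) = t := by
    rw [htdef, ← Real.sqrt_mul (by positivity)]
    congr 1
    field_simp
  have hlogt : 2 * Real.log t = Real.log (ε r) - Real.log (ε q) := by
    rw [htdef, Real.log_sqrt (by positivity), Real.log_div hεr.ne' hεq.ne']
    ring
  have hkey : s * Real.log t ≤ t * Real.log (N : ℝ) :=
    key_log t _ s ht hlnN hs0 hs
  rw [Real.rpow_def_of_pos hεq, Real.rpow_def_of_pos hεr, ← Real.exp_sub,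
    ← Real.exp_neg, Real.exp_le_exp]
  have harg : -(2 * Real.sqrt (ε r / α) * Real.log (N:ℝ)) * Real.sqrt (α / ε q)
      = -(2 * Real.log (N:ℝ)) * t := by
    rw [← hprod]; ring
  rw [harg]
  have h5 : Real.log (ε r) * s = (2 * Real.log t + Real.log (ε q)) * s := by
    rw [hlogt]; ring
  nlinarith [hkey, h5]
end

section
/- Comparability of layer values across one mesh interval: there exists a constant C depending only on n such that, for all N = 2^{n+p+1}, all ε and all indices with 1 ≤ r ≤ q ≤ n, B_q^L(σ_r − h_r) ≤ C·B_q^L(σ_r), where h_r = 2^{n−r+3}·N^{−1}·(σ_r − σ_{r−1}). -/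
lemma shishkinSigmaAux_nonneg (α lnN : ℝ) (ε : ℕ → ℝ) (n : ℕ) (hln : 0 ≤ lnN) :
    ∀ m, 0 ≤ shishkinSigmaAux α lnN ε n m := by
  intro m
  induction m with
  | zero =>
      refine le_min (by norm_num) ?_
      have := Real.sqrt_nonneg (ε n / α)
      positivity
  | succ m ih =>
      refine le_min (by linarith) ?_
      have := Real.sqrt_nonneg (ε (n - (m + 1)) / α)
      positivity

lemma shishkinSigma_nonneg (α N : ℝ) (ε : ℕ → ℝ) (n r : ℕ) (hN : 1 ≤ N) :
    0 ≤ shishkinSigma α N ε n r := by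
  unfold shishkinSigma
  split
  · exact le_refl 0
  · exact shishkinSigmaAux_nonneg _ _ _ _ (Real.log_nonneg hN) _

lemma shishkinSigma_le (α N : ℝ) (ε : ℕ → ℝ) (n r : ℕ) (hr : 1 ≤ r) (hrn : r ≤ n) :
    shishkinSigma α N ε n r ≤ 2 * Real.sqrt (ε r / α) * Real.log N := by
  unfold shishkinSigma
  rw [if_neg (by omega)]
  rcases h : n - r with _ | m
  · have hrn' : r = n := by omega
    subst hrn'
    exact min_le_right _ _
  · have : n - (m + 1) = r := by omega
    rw [shishkinSigmaAux, this]
    exact min_le_right _ _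

/-- **Comparability of layer values across one mesh interval** (inequality
(27) of the paper): there is a constant `C` depending only on `n` such that
for all `N = 2^{n+p+1}`, all `α`, all `ε` and all `1 ≤ r ≤ q ≤ n`,
`B_q^L(σ_r − h_r) ≤ C·B_q^L(σ_r)`, where
`h_r = 2^{n−r+3}·N^{−1}·(σ_r − σ_{r−1})` and `B_q^L(x) = exp(−x√(α/ε_q))`. -/
theorem stmt_14 (n : ℕ) (hn : 1 ≤ n) :
    ∃ C : ℝ, 0 < C ∧
      ∀ (α : ℝ), 0 < α →
      ∀ ε : ℕ → ℝ,
        (∀ i ∈ Finset.Icc 1 n, 0 < ε i) →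
        (∀ i ∈ Finset.Icc 1 n, ε i ≤ 1) →
        (∀ i j : ℕ, 1 ≤ i → i < j → j ≤ n → ε i < ε j) →
        (∀ i ∈ Finset.Icc 1 n, Real.sqrt (ε i) ≤ Real.sqrt α / 6) →
      ∀ (p N : ℕ), N = 2 ^ (n + p + 1) →
      ∀ r q : ℕ, 1 ≤ r → r ≤ q → q ≤ n →
        Real.exp (-(shishkinSigma α (N : ℝ) ε n r
              - (2 : ℝ) ^ (n - r + 3) * (N : ℝ)⁻¹
                  * (shishkinSigma α (N : ℝ) ε n r - shishkinSigma α (N : ℝ) ε n (r - 1)))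
            * Real.sqrt (α / ε q))
          ≤ C * Real.exp (-(shishkinSigma α (N : ℝ) ε n r) * Real.sqrt (α / ε q)) := by
  refine ⟨Real.exp ((2 : ℝ) ^ (n + 3)), Real.exp_pos _, ?_⟩
  intro α hα ε hpos hle hmono hsq p N hN r q hr hrq hqn
  set σ := shishkinSigma α (N : ℝ) ε n r with hσ
  set σ' := shishkinSigma α (N : ℝ) ε n (r - 1) with hσ'
  set s := Real.sqrt (α / ε q) with hs
  have hN1 : (1 : ℝ) ≤ (N : ℝ) := by
    have : (1 : ℕ) ≤ N := by rw [hN]; exact Nat.one_le_two_pow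
    exact_mod_cast this
  have hNpos : (0 : ℝ) < N := by linarith
  have hlnN : 0 ≤ Real.log N := Real.log_nonneg hN1
  have hlnN' : Real.log N ≤ N := Real.log_le_self (le_of_lt hNpos)
  have hεq : 0 < ε q := hpos q (Finset.mem_Icc.mpr ⟨le_trans hr hrq, hqn⟩)
  have hεr : 0 < ε r := hpos r (Finset.mem_Icc.mpr ⟨hr, le_trans hrq hqn⟩)
  have hεrq : ε r ≤ ε q := by
    rcases eq_or_lt_of_le hrq with h | h
    · rw [h]
    · exact le_of_lt (hmono r q hr h hqn)
  have hsnn : 0 ≤ s := Real.sqrt_nonneg _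
  -- the key product bound: √(ε r / α) * √(α / ε q) ≤ 1
  have hprod : Real.sqrt (ε r / α) * s ≤ 1 := by
    rw [hs, ← Real.sqrt_mul (by positivity)]
    have hx : ε r / α * (α / ε q) ≤ 1 := by
      rw [div_mul_div_comm, div_le_one (by positivity)]
      nlinarith
    calc Real.sqrt (ε r / α * (α / ε q)) ≤ Real.sqrt 1 := Real.sqrt_le_sqrt hx
    _ = 1 := Real.sqrt_one
  have hσle : σ ≤ 2 * Real.sqrt (ε r / α) * Real.log N :=
    shishkinSigma_le α N ε n r hr (le_trans hrq hqn)
  have hσ'nn : 0 ≤ σ' := shishkinSigma_nonneg α N ε n (r - 1) hN1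
  have hσnn : 0 ≤ σ := shishkinSigma_nonneg α N ε n r hN1
  -- bound on σ * s
  have hσs : σ * s ≤ 2 * Real.log N := by
    calc σ * s ≤ 2 * Real.sqrt (ε r / α) * Real.log N * s :=
        mul_le_mul_of_nonneg_right hσle hsnn
    _ = 2 * Real.log N * (Real.sqrt (ε r / α) * s) := by ring
    _ ≤ 2 * Real.log N * 1 := by
        apply mul_le_mul_of_nonneg_left hprod (by linarith)
    _ = 2 * Real.log N := by ring
  -- bound the whole correction term
  have hpow : (2 : ℝ) ^ (n - r + 3) ≤ (2 : ℝ) ^ (n + 2) := by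
    apply pow_le_pow_right₀ (by norm_num) (by omega)
  have hσ's : 0 ≤ σ' * s := mul_nonneg hσ'nn hsnn
  have hkey : (2 : ℝ) ^ (n - r + 3) * (N : ℝ)⁻¹ * (σ - σ') * s ≤ (2 : ℝ) ^ (n + 3) := by
    have h1 : (σ - σ') * s ≤ 2 * Real.log N := by
      have : (σ - σ') * s = σ * s - σ' * s := by ring
      linarith [this ▸ (by linarith : σ * s - σ' * s ≤ 2 * Real.log N)]
    have h2 : (0 : ℝ) < (2 : ℝ) ^ (n - r + 3) * (N : ℝ)⁻¹ := by positivity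
    calc (2 : ℝ) ^ (n - r + 3) * (N : ℝ)⁻¹ * (σ - σ') * s
        = (2 : ℝ) ^ (n - r + 3) * (N : ℝ)⁻¹ * ((σ - σ') * s) := by ring
      _ ≤ (2 : ℝ) ^ (n - r + 3) * (N : ℝ)⁻¹ * (2 * Real.log N) :=
          mul_le_mul_of_nonneg_left h1 (le_of_lt h2)
      _ ≤ (2 : ℝ) ^ (n + 2) * (N : ℝ)⁻¹ * (2 * (N : ℝ)) := by
          apply mul_le_mul
          · exact mul_le_mul_of_nonneg_right hpow (by positivity)
          · linarith
          · linarith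
          · positivity
      _ = (2 : ℝ) ^ (n + 2) * 2 * ((N : ℝ)⁻¹ * (N : ℝ)) := by ring
      _ = (2 : ℝ) ^ (n + 3) := by
          rw [inv_mul_cancel₀ (ne_of_gt hNpos)]
          ring
  rw [← Real.exp_add]
  apply Real.exp_le_exp.mpr
  nlinarith [hkey]
end
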